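/- arXiv:2501.15360 — 8 statements merged into one kernel-verified Lean document; each statement's English description precedes it below -/
import Mathlib

section
/- Let λ be a probability vector in ℝ^d with all entries strictly positive, and let Ω_k(λ)_{ij} = k λ_i δ_{ij} − √(λ_i λ_j) for a positive integer k < d. Then Ω_k(λ) has exactly one negative eigenvalue. -/
/-!
The quadratic form of `Ω_k(λ)` is `x ↦ k ∑ λᵢ xᵢ² - (∑ √λᵢ xᵢ)²`: a positive semidefinite form
minus a rank-one square. It is therefore nonnegative on the hyperplane orthogonal to `√λ`, and
since any two eigenvectors span a plane meeting that hyperplane nontrivially, at most one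
eigenvalue is negative. On the other hand the vector `(1/√λᵢ)ᵢ` gives the value `d (k - d) < 0`,
so some eigenvalue is negative.
-/

open Matrix

/-- The matrix `Ω_k(λ)` with entries `k λ_i δ_{ij} − √(λ_i λ_j)`. -/
noncomputable def OmegaMat (d k : ℕ) (lam : Fin d → ℝ) : Matrix (Fin d) (Fin d) ℝ :=
  fun i j => (if i = j then (k : ℝ) * lam i else 0) - Real.sqrt (lam i * lam j)

variable {n : Type*} [Fintype n]

lemma exists_ne_zero_dotProduct_smul_add_smul_eq_zero (v u w : n → ℝ) :
    ∃ a b : ℝ, (a ≠ 0 ∨ b ≠ 0) ∧ v ⬝ᵥ (a • u + b • w) = 0 := by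
  by_cases hu : v ⬝ᵥ u = 0
  · exact ⟨1, 0, .inl one_ne_zero, by simp [hu]⟩
  · refine ⟨v ⬝ᵥ w, -(v ⬝ᵥ u), .inr (neg_ne_zero.mpr hu), ?_⟩
    simp only [dotProduct_add, dotProduct_smul, smul_eq_mul]
    ring

namespace Matrix.IsHermitian

variable [DecidableEq n] {A : Matrix n n ℝ} (hA : A.IsHermitian)

lemma eigenvectorBasis_dotProduct (i j : n) :
    ⇑(hA.eigenvectorBasis i) ⬝ᵥ ⇑(hA.eigenvectorBasis j) = if i = j then 1 else 0 := by
  have h := orthonormal_iff_ite.mp hA.eigenvectorBasis.orthonormal j i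
  rw [EuclideanSpace.inner_eq_star_dotProduct, star_trivial] at h
  simpa only [eq_comm (a := j)] using h

lemma dotProduct_mulVec_smul_eigenvectorBasis_add {i j : n} (hij : i ≠ j) (a b : ℝ) :
    (a • ⇑(hA.eigenvectorBasis i) + b • ⇑(hA.eigenvectorBasis j)) ⬝ᵥ
        A *ᵥ (a • ⇑(hA.eigenvectorBasis i) + b • ⇑(hA.eigenvectorBasis j)) =
      a ^ 2 * hA.eigenvalues i + b ^ 2 * hA.eigenvalues j := by
  simp only [mulVec_add, mulVec_smul, mulVec_eigenvectorBasis, add_dotProduct, dotProduct_add,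
    smul_dotProduct, dotProduct_smul, eigenvectorBasis_dotProduct, if_neg hij,
    if_neg hij.symm, if_true, smul_eq_mul]
  ring

lemma card_filter_eigenvalues_neg_le_one (v : n → ℝ)
    (hv : ∀ x, v ⬝ᵥ x = 0 → 0 ≤ x ⬝ᵥ A *ᵥ x) :
    (Finset.univ.filter fun i => hA.eigenvalues i < 0).card ≤ 1 := by
  refine Finset.card_le_one.mpr fun i hi j hj => by_contra fun hij => ?_
  rw [Finset.mem_filter] at hi hj
  obtain ⟨a, b, hab, hx⟩ := exists_ne_zero_dotProduct_smul_add_smul_eq_zero v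
    (hA.eigenvectorBasis i) (hA.eigenvectorBasis j)
  have hnonneg := hv _ hx
  rw [hA.dotProduct_mulVec_smul_eigenvectorBasis_add hij] at hnonneg
  rcases hab with h | h <;> nlinarith [sq_pos_of_ne_zero h, sq_nonneg a, sq_nonneg b, hi.2, hj.2]

lemma exists_eigenvalue_neg {x : n → ℝ} (hx : x ⬝ᵥ A *ᵥ x < 0) : ∃ i, hA.eigenvalues i < 0 := by
  by_contra! h
  have hpsd := hA.posSemidef_iff_eigenvalues_nonneg.mpr h
  exact hx.not_ge (by simpa using hpsd.dotProduct_mulVec_nonneg x)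

end Matrix.IsHermitian

section OmegaMat

variable {d : ℕ} (k : ℕ) {lam : Fin d → ℝ}

lemma dotProduct_OmegaMat_mulVec (hlam : ∀ i, 0 ≤ lam i) (x : Fin d → ℝ) :
    x ⬝ᵥ OmegaMat d k lam *ᵥ x =
      k * ∑ i, lam i * x i ^ 2 - ((fun i => √(lam i)) ⬝ᵥ x) ^ 2 := by
  have hsqrt : ∀ i j, √(lam i * lam j) = √(lam i) * √(lam j) :=
    fun i j => Real.sqrt_mul (hlam i) _
  simp only [OmegaMat, dotProduct, mulVec, sub_mul, mul_sub, Finset.sum_sub_distrib,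
    Finset.mul_sum, hsqrt, ite_mul, zero_mul, Finset.sum_ite_eq, Finset.mem_univ, if_true]
  rw [sq, Finset.sum_mul_sum]
  congr 1
  · exact Finset.sum_congr rfl fun i _ => by ring
  · exact Finset.sum_congr rfl fun i _ => Finset.sum_congr rfl fun j _ => by ring

lemma dotProduct_OmegaMat_mulVec_nonneg (hlam : ∀ i, 0 ≤ lam i) {x : Fin d → ℝ}
    (hx : (fun i => √(lam i)) ⬝ᵥ x = 0) : 0 ≤ x ⬝ᵥ OmegaMat d k lam *ᵥ x := by
  rw [dotProduct_OmegaMat_mulVec k hlam, hx, zero_pow two_ne_zero, sub_zero]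
  exact mul_nonneg k.cast_nonneg (Finset.sum_nonneg fun i _ => mul_nonneg (hlam i) (sq_nonneg _))

lemma dotProduct_OmegaMat_mulVec_inv_sqrt (hlam : ∀ i, 0 < lam i) :
    (fun i => (√(lam i))⁻¹) ⬝ᵥ OmegaMat d k lam *ᵥ (fun i => (√(lam i))⁻¹) = d * (k - d) := by
  have hsq : ∀ i, lam i * ((√(lam i))⁻¹) ^ 2 = 1 := fun i => by
    rw [inv_pow, Real.sq_sqrt (hlam i).le, mul_inv_cancel₀ (hlam i).ne']
  have hprod : ∀ i, √(lam i) * (√(lam i))⁻¹ = 1 :=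
    fun i => mul_inv_cancel₀ (Real.sqrt_ne_zero'.mpr (hlam i))
  rw [dotProduct_OmegaMat_mulVec k fun i => (hlam i).le]
  simp only [dotProduct, hsq, hprod, Finset.sum_const, Finset.card_univ, Fintype.card_fin,
    nsmul_eq_mul, mul_one]
  ring

end OmegaMat

theorem stmt2_general (d k : ℕ) (hkd : k < d) (lam : Fin d → ℝ)
    (hpos : ∀ i, 0 < lam i)
    (hH : (OmegaMat d k lam).IsHermitian) :
    (Finset.univ.filter fun i => hH.eigenvalues i < 0).card = 1 := by
  refine le_antisymm (hH.card_filter_eigenvalues_neg_le_one _ fun x =>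
    dotProduct_OmegaMat_mulVec_nonneg k fun i => (hpos i).le) ?_
  have hneg : (d : ℝ) * (k - d) < 0 :=
    mul_neg_of_pos_of_neg (by exact_mod_cast (Nat.zero_le k).trans_lt hkd)
      (sub_neg.mpr (by exact_mod_cast hkd))
  rw [← dotProduct_OmegaMat_mulVec_inv_sqrt k hpos] at hneg
  obtain ⟨i, hi⟩ := hH.exists_eigenvalue_neg hneg
  exact Finset.card_pos.mpr ⟨i, Finset.mem_filter.mpr ⟨Finset.mem_univ i, hi⟩⟩

theorem stmt2 (d k : ℕ) (hk : 0 < k) (hkd : k < d) (lam : Fin d → ℝ)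
    (hpos : ∀ i, 0 < lam i) (hsum : ∑ i, lam i = 1)
    (hH : (OmegaMat d k lam).IsHermitian) :
    (Finset.univ.filter fun i => hH.eigenvalues i < 0).card = 1 :=
  stmt2_general d k hkd lam hpos hH
end

section
/- Let λ be a probability vector in ℝ^d with all entries positive, let k be a positive integer with k < d, and let θ > 0 be the absolute value of the unique negative eigenvalue of the matrix Ω_k(λ) with entries k λ_i δ_{ij} − √(λ_i λ_j). Then θ satisfies the secular equation ∑_{i=0}^{d−1} λ_i / (k λ_i + θ) = 1. -/
open Matrix

theorem stmt3 (d k : ℕ) (hk : 0 < k) (hkd : k < d) (lam : Fin d → ℝ)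
    (hpos : ∀ i, 0 < lam i) (hsum : ∑ i, lam i = 1)
    (hH : (OmegaMat d k lam).IsHermitian) (θ : ℝ) (hθ : 0 < θ)
    (hmin : IsLeast (Set.range hH.eigenvalues) (-θ)) :
    ∑ i, lam i / ((k : ℝ) * lam i + θ) = 1 := by
  obtain ⟨i0, hi0⟩ := hmin.1
  set v : Fin d → ℝ := ⇑(hH.eigenvectorBasis i0) with hv
  have hev : OmegaMat d k lam *ᵥ v = (-θ) • v := by
    rw [hv, hH.mulVec_eigenvectorBasis, hi0]
  have hvne : v ≠ 0 := by
    intro h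
    have := hH.eigenvectorBasis.toBasis.ne_zero i0
    apply this
    ext j
    have := congrFun h j
    simpa [hv] using this
  have hden : ∀ i, 0 < (k : ℝ) * lam i + θ := fun i => by
    have : (0:ℝ) < (k : ℝ) * lam i := by
      apply mul_pos (by exact_mod_cast hk) (hpos i)
    linarith
  set c : ℝ := ∑ j, Real.sqrt (lam j) * v j with hc
  have key : ∀ i, ((k : ℝ) * lam i + θ) * v i = Real.sqrt (lam i) * c := by
    intro i
    have h1 := congrFun hev i
    have h2 : (OmegaMat d k lam *ᵥ v) i
        = (k : ℝ) * lam i * v i - Real.sqrt (lam i) * c := by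
      simp only [mulVec, dotProduct, OmegaMat, sub_mul, ite_mul, zero_mul,
        Finset.sum_sub_distrib, Finset.sum_ite_eq, Finset.mem_univ, if_true, hc,
        Finset.mul_sum]
      congr 1
      apply Finset.sum_congr rfl
      intro j _
      rw [Real.sqrt_mul (hpos i).le]
      ring
    rw [h2] at h1
    have h3 : ((-θ) • v) i = -θ * v i := rfl
    rw [h3] at h1
    linarith
  have hcne : c ≠ 0 := by
    intro hc0
    apply hvne
    funext i
    have := key i
    rw [hc0, mul_zero] at this
    have := (mul_eq_zero.mp this).resolve_left (ne_of_gt (hden i))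
    simpa using this
  have hvi : ∀ i, v i = Real.sqrt (lam i) * c / ((k : ℝ) * lam i + θ) := by
    intro i
    rw [eq_div_iff (ne_of_gt (hden i))]
    linarith [key i]
  have hsum2 : c = c * ∑ i, lam i / ((k : ℝ) * lam i + θ) := by
    rw [hc, Finset.mul_sum]
    apply Finset.sum_congr rfl
    intro i _
    rw [hvi i]
    rw [show Real.sqrt (lam i) * (Real.sqrt (lam i) * c / ((k:ℝ) * lam i + θ))
        = (Real.sqrt (lam i) * Real.sqrt (lam i)) * c / ((k:ℝ) * lam i + θ) by ring,
      Real.mul_self_sqrt (hpos i).le]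
    ring
  have := mul_left_cancel₀ hcne (hsum2.symm.trans (mul_one c).symm)
  linarith [this]
end

section
/- Let |ψ⟩ be a bipartite pure state on H_A ⊗ H_B with Schmidt vector λ and reduced state ρ_A. Then the spectrum of the operator R_k(ψ) = k ρ_A ⊗ I_B − |ψ⟩⟨ψ| equals the spectrum of the matrix Ω_k(λ) (with entries kλ_iδ_{ij} − √(λ_iλ_j)) together with each eigenvalue kλ_i repeated d_B − 1 times. -/
open Matrix Kronecker Polynomial

variable {n : Type*} [Fintype n] [DecidableEq n]

lemma charpoly_conj_unitary (V D : Matrix n n ℝ) (hV : V * star V = 1) :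
    (V * D * star V).charpoly = D.charpoly := by
  have hmul : ∀ (A B : Matrix n n ℝ),
      (A * B).map (C : ℝ →+* ℝ[X]) = A.map C * B.map C := fun A B => Matrix.map_mul
  have hone : ((1 : Matrix n n ℝ)).map (C : ℝ →+* ℝ[X]) = 1 :=
    Matrix.map_one _ (map_zero C) (map_one C)
  have hcomm : ∀ (M : Matrix n n ℝ[X]), M * Matrix.scalar n (X : ℝ[X]) = Matrix.scalar n X * M := by
    intro M; ext i j; rw [Matrix.scalar_apply, Matrix.mul_diagonal, Matrix.diagonal_mul]; ring_nf
  have hscalar : V.map (C : ℝ →+* ℝ[X]) * Matrix.scalar n (X : ℝ[X]) * (star V).map C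
      = Matrix.scalar n X := by
    rw [hcomm, mul_assoc, ← hmul, hV, hone, mul_one]
  have hchar : (V * D * star V).charmatrix
      = V.map (C : ℝ →+* ℝ[X]) * D.charmatrix * (star V).map C := by
    rw [charmatrix, charmatrix]
    simp only [RingHom.mapMatrix_apply]
    rw [hmul, hmul, mul_sub, sub_mul, hscalar]
  rw [Matrix.charpoly, Matrix.charpoly, hchar, det_mul, det_mul, mul_comm, ← mul_assoc, ← det_mul,
    ← hmul, mul_eq_one_comm.mp hV, hone, det_one, one_mul]

lemma charpoly_diagonal' (v : n → ℝ) :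
    (Matrix.diagonal v).charpoly = ∏ i, (X - C (v i)) := by
  have : (Matrix.diagonal v).charmatrix = Matrix.diagonal (fun i => X - C (v i)) := by
    ext i j
    by_cases h : i = j
    · subst h; simp [charmatrix_apply_eq]
    · simp [charmatrix_apply_ne _ _ _ h, Matrix.diagonal_apply_ne _ h]
  rw [Matrix.charpoly, this, det_diagonal]

lemma eig_multiset_eq_roots (A : Matrix n n ℝ) (hA : A.IsHermitian) :
    Multiset.map hA.eigenvalues Finset.univ.val = A.charpoly.roots := by
  have hsp := hA.spectral_theorem
  have hd : Matrix.diagonal ((RCLike.ofReal : ℝ → ℝ) ∘ hA.eigenvalues)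
      = Matrix.diagonal hA.eigenvalues := by congr 1
  have hU : (hA.eigenvectorUnitary : Matrix n n ℝ) *
      star (hA.eigenvectorUnitary : Matrix n n ℝ) = 1 :=
    (Matrix.mem_unitaryGroup_iff).mp hA.eigenvectorUnitary.2
  have hc : A.charpoly = (Matrix.diagonal hA.eigenvalues).charpoly := by
    conv_lhs => rw [hsp]
    rw [hd]
    exact charpoly_conj_unitary _ _ hU
  rw [hc, charpoly_diagonal']
  rw [show ∏ i, (X - C (hA.eigenvalues i))
      = ((Finset.univ.val.map hA.eigenvalues).map fun a => X - C a).prod by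
    rw [Multiset.map_map]; rfl]
  rw [Polynomial.roots_multiset_prod_X_sub_C]

/-- The pure state with Schmidt vector `λ` (in Schmidt form), `|ψ⟩ = ∑ √λ_i |i⟩|i⟩`. -/
noncomputable def schmidtVec (d dB : ℕ) (lam : Fin d → ℝ) : Fin d × Fin dB → ℝ :=
  fun p => if (p.2 : ℕ) = (p.1 : ℕ) then Real.sqrt (lam p.1) else 0

theorem stmt7 (d dB k : ℕ) (hk : 0 < k) (hd : 0 < d) (hddB : d ≤ dB)
    (lam : Fin d → ℝ) (hnonneg : ∀ i, 0 ≤ lam i) (hsum : ∑ i, lam i = 1)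
    -- R_k(ψ) = k ρ_A ⊗ I_B − |ψ⟩⟨ψ|, with ρ_A = diag λ in the Schmidt basis
    (R : Matrix (Fin d × Fin dB) (Fin d × Fin dB) ℝ)
    (hRdef : R = (k : ℝ) • (Matrix.diagonal lam ⊗ₖ (1 : Matrix (Fin dB) (Fin dB) ℝ))
      - Matrix.vecMulVec (schmidtVec d dB lam) (schmidtVec d dB lam))
    (hR : R.IsHermitian) (hΩ : (OmegaMat d k lam).IsHermitian) :
    Multiset.map hR.eigenvalues Finset.univ.val =
      Multiset.map hΩ.eigenvalues Finset.univ.val +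
        (dB - 1) • Multiset.map (fun i => (k : ℝ) * lam i) Finset.univ.val := by
  classical
  -- entrywise description of R
  have hRe : ∀ p q : Fin d × Fin dB, R p q =
      (if p.1 = q.1 ∧ p.2 = q.2 then (k : ℝ) * lam p.1 else 0)
        - schmidtVec d dB lam p * schmidtVec d dB lam q := by
    intro p q
    by_cases h1 : p.1 = q.1 <;> by_cases h2 : p.2 = q.2 <;>
      simp [hRdef, Matrix.kroneckerMap_apply, Matrix.diagonal_apply, Matrix.one_apply,
        Matrix.vecMulVec_apply, h1, h2]
  -- the index equivalence
  let φ : Fin d ≃ {p : Fin d × Fin dB // ((p.2 : ℕ) = (p.1 : ℕ))} :=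
  { toFun := fun i => ⟨(i, Fin.castLE hddB i), by simp⟩
    invFun := fun p => p.1.1
    left_inv := fun i => rfl
    right_inv := fun p => by
      obtain ⟨⟨a, b⟩, hb⟩ := p
      simp only at hb
      exact Subtype.ext (Prod.ext rfl (Fin.ext (by simpa using hb.symm))) }
  let e : (Fin d ⊕ {p : Fin d × Fin dB // ¬ ((p.2 : ℕ) = (p.1 : ℕ))}) ≃ Fin d × Fin dB :=
    (Equiv.sumCongr φ (Equiv.refl _)).trans (Equiv.sumCompl _)
  let g : {p : Fin d × Fin dB // ¬ ((p.2 : ℕ) = (p.1 : ℕ))} → ℝ := fun p => (k : ℝ) * lam p.1.1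
  -- block structure
  have hM : R.submatrix e e = Matrix.fromBlocks (OmegaMat d k lam) 0 0 (Matrix.diagonal g) := by
    ext x y
    cases x with
    | inl a =>
      cases y with
      | inl b =>
        show R (a, Fin.castLE hddB a) (b, Fin.castLE hddB b) = OmegaMat d k lam a b
        rw [hRe]
        by_cases hab : a = b <;>
          simp [OmegaMat, schmidtVec, hab, Real.sqrt_mul (hnonneg a), Fin.castLE_inj,
            Real.sqrt_mul_self (hnonneg b), Real.mul_self_sqrt (hnonneg b)]
      | inr q =>
        show R (a, Fin.castLE hddB a) q.val = 0
        obtain ⟨⟨b, j⟩, hq⟩ := q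
        rw [hRe]
        have hcond : ¬(a = b ∧ Fin.castLE hddB a = j) := by
          rintro ⟨rfl, rfl⟩; exact hq (by simp)
        simp [schmidtVec, hq, hcond]
    | inr p =>
      cases y with
      | inl b =>
        show R p.val (b, Fin.castLE hddB b) = 0
        obtain ⟨⟨a, i⟩, hp⟩ := p
        rw [hRe]
        have hcond : ¬(a = b ∧ i = Fin.castLE hddB b) := by
          rintro ⟨rfl, rfl⟩; exact hp (by simp)
        simp [schmidtVec, hp, hcond]
      | inr q =>
        show R p.val q.val = Matrix.diagonal g p q
        rw [hRe]
        obtain ⟨⟨a, i⟩, hp⟩ := p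
        obtain ⟨⟨b, j⟩, hq⟩ := q
        simp [schmidtVec, hp, Matrix.diagonal_apply, g, Subtype.mk.injEq, Prod.mk.injEq]
  -- characteristic polynomial factorization
  have hcp : R.charpoly = (OmegaMat d k lam).charpoly * ∏ p, (X - C (g p)) := by
    have h1 : (Matrix.reindex e.symm e.symm R).charpoly = R.charpoly :=
      Matrix.charpoly_reindex _ _
    rw [← h1, Matrix.reindex_apply, Equiv.symm_symm, hM, Matrix.charpoly_fromBlocks_zero₂₁,
      charpoly_diagonal']
  have hmonΩ : (OmegaMat d k lam).charpoly.Monic := Matrix.charpoly_monic _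
  have hmonP : (∏ p, (X - C (g p))).Monic :=
    monic_prod_of_monic _ _ fun p _ => monic_X_sub_C _
  have hProots : (∏ p, (X - C (g p))).roots = Finset.univ.val.map g := by
    rw [show ∏ p, (X - C (g p)) = ((Finset.univ.val.map g).map fun a => X - C a).prod by
      rw [Multiset.map_map]; rfl]
    rw [Polynomial.roots_multiset_prod_X_sub_C]
  rw [eig_multiset_eq_roots R hR, eig_multiset_eq_roots _ hΩ, hcp,
    Polynomial.roots_mul (mul_ne_zero hmonΩ.ne_zero hmonP.ne_zero), hProots]
  congr 1
  -- counting: each k·λ_i appears dB - 1 times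
  have hfac : Finset.univ.val.map g
      = Multiset.map (fun i => (k : ℝ) * lam i)
          (Finset.univ.val.map (fun p : {p : Fin d × Fin dB // ¬ ((p.2 : ℕ) = (p.1 : ℕ))}
            => p.1.1)) := by
    rw [Multiset.map_map]; rfl
  rw [hfac, ← Multiset.map_nsmul]
  congr 1
  ext i
  rw [Multiset.count_nsmul, Multiset.count_map]
  have huniv : Multiset.count i (Finset.univ.val : Multiset (Fin d)) = 1 :=
    Multiset.count_univ i
  rw [huniv, mul_one]
  have hfilt : (Multiset.filter
        (fun p : {p : Fin d × Fin dB // ¬ ((p.2 : ℕ) = (p.1 : ℕ))} => i = p.1.1)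
        Finset.univ.val).card
      = Fintype.card {p : {p : Fin d × Fin dB // ¬ ((p.2 : ℕ) = (p.1 : ℕ))} // i = p.1.1} := by
    rw [Fintype.card_subtype, ← Finset.filter_val]
    rfl
  rw [hfilt]
  have hequiv : {p : {p : Fin d × Fin dB // ¬ ((p.2 : ℕ) = (p.1 : ℕ))} // i = p.1.1}
      ≃ {j : Fin dB // ¬ ((j : ℕ) = (i : ℕ))} :=
  { toFun := fun p => ⟨p.1.1.2, by
      obtain ⟨⟨⟨a, j⟩, h⟩, hi⟩ := p
      simp only at hi ⊢
      subst hi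
      exact h⟩
    invFun := fun j => ⟨⟨(i, j.1), by simpa using j.2⟩, rfl⟩
    left_inv := fun p => by
      obtain ⟨⟨⟨a, j⟩, h⟩, hi⟩ := p
      simp only at hi
      subst hi
      rfl
    right_inv := fun j => rfl }
  rw [Fintype.card_congr hequiv]
  have hcond : ∀ j : Fin dB, ((j : ℕ) = (i : ℕ)) ↔ j = Fin.castLE hddB i := by
    intro j; rw [Fin.ext_iff]; simp
  rw [Fintype.card_congr (Equiv.subtypeEquivRight fun j => not_congr (hcond j)),
    Fintype.card_subtype_compl, Fintype.card_subtype_eq, Fintype.card_fin]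
end

section
/- Let |ψ⟩ be a bipartite pure state with Schmidt rank r on H_A ⊗ H_B, and k a positive integer. If k ≥ r then the operator R_k(ψ) = k ρ_A ⊗ I_B − |ψ⟩⟨ψ| is positive semidefinite, while if 1 ≤ k < r then R_k(ψ) has exactly one negative eigenvalue. -/
/-!
Write `ψ = vec Ψ` with `Ψ` its coefficient matrix, so that `ρ_A = (Ψᴴ Ψ)ᵀ`, `r = rank Ψ` and, for
`x = vec X`, `⟨x, R x⟩ = k ‖X Ψᴴ‖² - |tr (Ψᴴ X)|²`. In a basis diagonalising `Ψᴴ Ψ` (a Schmidt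
basis) the columns of `Ψ` are orthogonal and only `r` of them are nonzero, so Cauchy–Schwarz gives
`|tr (Ψᴴ X)|² ≤ r ‖X Ψᴴ‖²`; hence `R ≥ 0` as soon as `r ≤ k`. The choice `X = Ψ (Ψᴴ Ψ)⁺` makes both
terms equal to `r`, so for `k < r` the form is negative somewhere. At most one eigenvalue is
negative because `R + |ψ⟩⟨ψ| = k ρ_A ⊗ I ≥ 0`: a two-dimensional negative eigenspace would contain a
nonzero vector orthogonal to `ψ`.
-/

open Matrix Kronecker ComplexOrder

/-- Partial trace over the second factor. -/
noncomputable def ptraceB (dA dB : ℕ) (ρ : Matrix (Fin dA × Fin dB) (Fin dA × Fin dB) ℂ) :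
    Matrix (Fin dA) (Fin dA) ℂ :=
  fun a a' => ∑ b, ρ (a, b) (a', b)

open Finset

theorem norm_sum_inner_sq_le_card_mul {𝕜 ι E : Type*} [RCLike 𝕜] [NormedAddCommGroup E]
    [InnerProductSpace 𝕜 E] (s : Finset ι) (u v : ι → E) :
    ‖∑ i ∈ s, inner 𝕜 (u i) (v i)‖ ^ 2 ≤ #s * ∑ i ∈ s, ‖u i‖ ^ 2 * ‖v i‖ ^ 2 := by
  calc ‖∑ i ∈ s, inner 𝕜 (u i) (v i)‖ ^ 2 ≤ (∑ i ∈ s, ‖u i‖ * ‖v i‖) ^ 2 := by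
        gcongr
        exact (norm_sum_le _ _).trans (sum_le_sum fun i _ => norm_inner_le_norm _ _)
    _ ≤ #s * ∑ i ∈ s, (‖u i‖ * ‖v i‖) ^ 2 := sq_sum_le_card_mul_sum_sq
    _ = #s * ∑ i ∈ s, ‖u i‖ ^ 2 * ‖v i‖ ^ 2 := by simp only [mul_pow]

namespace Matrix.IsHermitian

variable {𝕜 n : Type*} [RCLike 𝕜] [Fintype n] [DecidableEq n] {R : Matrix n n 𝕜}

theorem star_dotProduct_mulVec_add_eigenvectorBasis (hR : R.IsHermitian) {i j : n} (hij : i ≠ j)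
    (a b : 𝕜) :
    star ⇑(a • hR.eigenvectorBasis i + b • hR.eigenvectorBasis j) ⬝ᵥ
      (R *ᵥ ⇑(a • hR.eigenvectorBasis i + b • hR.eigenvectorBasis j)) =
      ((‖a‖ ^ 2 * hR.eigenvalues i + ‖b‖ ^ 2 * hR.eigenvalues j : ℝ) : 𝕜) := by
  have hRe : R *ᵥ ⇑(a • hR.eigenvectorBasis i + b • hR.eigenvectorBasis j) =
      ⇑((a * hR.eigenvalues i) • hR.eigenvectorBasis i +
        (b * hR.eigenvalues j) • hR.eigenvectorBasis j) := by
    simp only [WithLp.ofLp_add, WithLp.ofLp_smul, mulVec_add, mulVec_smul,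
      hR.mulVec_eigenvectorBasis, smul_smul, RCLike.real_smul_eq_coe_smul (K := 𝕜)]
  have hON := hR.eigenvectorBasis.orthonormal
  rw [hRe, dotProduct_comm, ← EuclideanSpace.inner_eq_star_dotProduct]
  simp only [inner_add_right, inner_smul_right, inner_add_left, inner_smul_left,
    inner_self_eq_norm_sq_to_K, OrthonormalBasis.norm_eq_one, map_one, one_pow, mul_one,
    hON.inner_eq_zero hij.symm, mul_zero, add_zero, hON.inner_eq_zero hij, zero_add, map_add,
    map_mul, map_pow]
  rw [mul_right_comm a, RCLike.mul_conj, mul_right_comm b, RCLike.mul_conj]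

theorem exists_eigenvalues_neg_of_not_nonneg (hR : R.IsHermitian) {x : n → 𝕜}
    (hx : ¬ 0 ≤ star x ⬝ᵥ (R *ᵥ x)) : ∃ i, hR.eigenvalues i < 0 := by
  by_contra! hnonneg
  exact hx ((hR.posSemidef_iff_eigenvalues_nonneg.mpr hnonneg).dotProduct_mulVec_nonneg x)

theorem card_eigenvalues_neg_le_one (hR : R.IsHermitian) (v : n → 𝕜)
    (hpsd : (R + vecMulVec v (star v)).PosSemidef) : #{i | hR.eigenvalues i < 0} ≤ 1 := by
  refine card_le_one.mpr fun i hi j hj => by_contra fun hij => ?_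
  simp only [mem_filter, mem_univ, true_and] at hi hj
  set e := hR.eigenvectorBasis
  obtain ⟨a, b, hab, horth⟩ :
      ∃ a b : 𝕜, (a ≠ 0 ∨ b ≠ 0) ∧ star v ⬝ᵥ ⇑(a • e i + b • e j) = 0 := by
    by_cases hvi : star v ⬝ᵥ ⇑(e i) = 0
    · exact ⟨1, 0, Or.inl one_ne_zero, by simpa using hvi⟩
    · refine ⟨star v ⬝ᵥ ⇑(e j), -(star v ⬝ᵥ ⇑(e i)), Or.inr (neg_ne_zero.mpr hvi), ?_⟩
      simp only [WithLp.ofLp_add, WithLp.ofLp_smul, dotProduct_add, dotProduct_smul, smul_eq_mul]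
      ring
  have hnonneg := hpsd.dotProduct_mulVec_nonneg ⇑(a • e i + b • e j)
  rw [add_mulVec, dotProduct_add, vecMulVec_mulVec, dotProduct_smul, horth, MulOpposite.op_zero,
    zero_smul, add_zero, hR.star_dotProduct_mulVec_add_eigenvectorBasis hij,
    RCLike.ofReal_nonneg] at hnonneg
  rcases hab with ha | hb
  · nlinarith [pow_pos (norm_pos_iff.mpr ha) 2, sq_nonneg ‖b‖]
  · nlinarith [pow_pos (norm_pos_iff.mpr hb) 2, sq_nonneg ‖a‖]

end Matrix.IsHermitian

namespace Matrix

section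

variable {𝕜 m n : Type*} [RCLike 𝕜] [Fintype m]

theorem conjTranspose_mul_apply_eq_inner (P Q : Matrix m n 𝕜) (i j : n) :
    (Pᴴ * Q) i j = inner 𝕜 (WithLp.toLp 2 (Pᵀ i)) (WithLp.toLp 2 (Qᵀ j)) := by
  simp [mul_apply, EuclideanSpace.inner_toLp_toLp, dotProduct, mul_comm]

theorem conjTranspose_mul_self_apply_self (P : Matrix m n 𝕜) (j : n) :
    (Pᴴ * P) j j = ((‖WithLp.toLp 2 (Pᵀ j)‖ ^ 2 : ℝ) : 𝕜) := by
  rw [conjTranspose_mul_apply_eq_inner, inner_self_eq_norm_sq_to_K, RCLike.ofReal_pow]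

variable [Fintype n] [DecidableEq n]

theorem star_trace_mul_trace_le_of_conjTranspose_mul_self_eq_diagonal {Φ : Matrix m n 𝕜}
    {d : n → ℝ} (hΦ : Φᴴ * Φ = diagonal fun j => (d j : 𝕜)) (Y : Matrix m n 𝕜) :
    star (trace (Φᴴ * Y)) * trace (Φᴴ * Y) ≤ #{j | d j ≠ 0} * trace (Yᴴ * Y * (Φᴴ * Φ)) := by
  set u : n → EuclideanSpace 𝕜 m := fun j => WithLp.toLp 2 (Φᵀ j)
  set v : n → EuclideanSpace 𝕜 m := fun j => WithLp.toLp 2 (Yᵀ j)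
  have hu (j : n) : ‖u j‖ ^ 2 = d j := by
    have := conjTranspose_mul_self_apply_self Φ j
    rw [hΦ, diagonal_apply_eq] at this
    exact_mod_cast this.symm
  have htrace : trace (Φᴴ * Y) = ∑ j ∈ {j | d j ≠ 0}, inner 𝕜 (u j) (v j) := by
    have hsupp (j : n) (hj : j ∉ ({j | d j ≠ 0} : Finset n)) : u j = 0 := by
      simpa [← hu j] using hj
    rw [sum_subset (subset_univ _) fun j _ hj => by rw [hsupp j hj, inner_zero_left]]
    exact sum_congr rfl fun j _ => conjTranspose_mul_apply_eq_inner Φ Y j j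
  have hquad : trace (Yᴴ * Y * (Φᴴ * Φ)) = ((∑ j, ‖u j‖ ^ 2 * ‖v j‖ ^ 2 : ℝ) : 𝕜) := by
    simp [hΦ, trace, conjTranspose_mul_self_apply_self, hu, v, mul_comm]
  rw [RCLike.star_def, RCLike.conj_mul, hquad, htrace]
  norm_cast
  calc _ ≤ #{j | d j ≠ 0} * ∑ j ∈ {j | d j ≠ 0}, ‖u j‖ ^ 2 * ‖v j‖ ^ 2 :=
        norm_sum_inner_sq_le_card_mul _ u v
    _ ≤ #{j | d j ≠ 0} * ∑ j, ‖u j‖ ^ 2 * ‖v j‖ ^ 2 := by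
        gcongr
        exact subset_univ _

/-- `(d j)⁻¹` acts as the pseudo-inverse of `d j`, since `0⁻¹ = 0`. -/
theorem trace_conjTranspose_mul_diagonal_inv_eq_card {Φ : Matrix m n 𝕜} {d : n → ℝ}
    (hΦ : Φᴴ * Φ = diagonal fun j => (d j : 𝕜)) :
    trace (Φᴴ * (Φ * diagonal fun j => (d j : 𝕜)⁻¹)) = #{j | d j ≠ 0} ∧
      trace ((Φ * diagonal fun j => (d j : 𝕜)⁻¹)ᴴ * (Φ * diagonal fun j => (d j : 𝕜)⁻¹) *
        (Φᴴ * Φ)) = #{j | d j ≠ 0} := by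
  have hcard : ∑ j, (d j : 𝕜) * (d j : 𝕜)⁻¹ = #{j | d j ≠ 0} := by
    rw [← sum_boole]
    refine sum_congr rfl fun j _ => ?_
    split_ifs with h
    · exact mul_inv_cancel₀ (RCLike.ofReal_ne_zero.mpr h)
    · simp [not_not.mp h]
  constructor
  · rw [← Matrix.mul_assoc, hΦ, diagonal_mul_diagonal, trace_diagonal, hcard]
  · simp only [conjTranspose_mul, Matrix.mul_assoc, hΦ]
    rw [← Matrix.mul_assoc Φᴴ, hΦ, diagonal_conjTranspose, diagonal_mul_diagonal,
      diagonal_mul_diagonal, diagonal_mul_diagonal, trace_diagonal, ← hcard]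
    refine sum_congr rfl fun j _ => ?_
    by_cases h : d j = 0
    · simp [h]
    · simp [RCLike.ofReal_ne_zero.mpr h]

theorem exists_unitary_conjTranspose_mul_self_eq_diagonal (Ψ : Matrix m n 𝕜) :
    ∃ V ∈ unitaryGroup n 𝕜, ∃ d : n → ℝ,
      (Ψ * V)ᴴ * (Ψ * V) = diagonal (fun j => (d j : 𝕜)) ∧ Ψ.rank = #{j | d j ≠ 0} := by
  have hA := isHermitian_conjTranspose_mul_self Ψ
  refine ⟨hA.eigenvectorUnitary, hA.eigenvectorUnitary.2, hA.eigenvalues, ?_, ?_⟩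
  · have h := hA.conjStarAlgAut_star_eigenvectorUnitary
    rw [Unitary.conjStarAlgAut_apply] at h
    convert h using 1
    · simp [Matrix.mul_assoc, star_eq_conjTranspose]
    · rfl
  · rw [← rank_conjTranspose_mul_self, hA.rank_eq_card_non_zero_eigs, Fintype.card_subtype]

theorem trace_conjTranspose_mul_mul_unitary {V : Matrix n n 𝕜} (hV : V ∈ unitaryGroup n 𝕜)
    (Ψ X : Matrix m n 𝕜) :
    trace ((Ψ * V)ᴴ * (X * V)) = trace (Ψᴴ * X) ∧
      trace ((X * V)ᴴ * (X * V) * ((Ψ * V)ᴴ * (Ψ * V))) = trace (Xᴴ * X * (Ψᴴ * Ψ)) := by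
  have hVV : V * Vᴴ = 1 := mem_unitaryGroup_iff.mp hV
  have hVV' (Z : Matrix n n 𝕜) : V * (Vᴴ * Z) = Z := by
    rw [← Matrix.mul_assoc, hVV, Matrix.one_mul]
  simp only [conjTranspose_mul, Matrix.mul_assoc]
  constructor <;>
  · rw [trace_mul_comm Vᴴ]
    simp only [Matrix.mul_assoc, hVV, hVV', Matrix.mul_one]

theorem star_trace_mul_trace_le_rank_mul (Ψ X : Matrix m n 𝕜) :
    star (trace (Ψᴴ * X)) * trace (Ψᴴ * X) ≤ Ψ.rank * trace (Xᴴ * X * (Ψᴴ * Ψ)) := by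
  obtain ⟨V, hV, d, hΦ, hrank⟩ := exists_unitary_conjTranspose_mul_self_eq_diagonal Ψ
  obtain ⟨h1, h2⟩ := trace_conjTranspose_mul_mul_unitary hV Ψ X
  rw [← h1, ← h2, hrank]
  exact star_trace_mul_trace_le_of_conjTranspose_mul_self_eq_diagonal hΦ (X * V)

theorem exists_trace_conjTranspose_mul_eq_rank (Ψ : Matrix m n 𝕜) :
    ∃ X : Matrix m n 𝕜, trace (Ψᴴ * X) = Ψ.rank ∧ trace (Xᴴ * X * (Ψᴴ * Ψ)) = Ψ.rank := by
  obtain ⟨V, hV, d, hΦ, hrank⟩ := exists_unitary_conjTranspose_mul_self_eq_diagonal Ψ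
  set Y := Ψ * V * diagonal fun j => (d j : 𝕜)⁻¹
  refine ⟨Y * star V, ?_⟩
  obtain ⟨h1, h2⟩ := trace_conjTranspose_mul_mul_unitary hV Ψ (Y * star V)
  have hYV : Y * star V * V = Y := by
    rw [Matrix.mul_assoc, mem_unitaryGroup_iff'.mp hV, Matrix.mul_one]
  rw [hYV] at h1 h2
  rw [← h1, ← h2, hrank]
  exact trace_conjTranspose_mul_diagonal_inv_eq_card hΦ

end

variable {𝕜 m n : Type*} [RCLike 𝕜] [Fintype n]

theorem star_dotProduct_vecMulVec_star_mulVec (ψ x : n → 𝕜) :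
    star x ⬝ᵥ (vecMulVec ψ (star ψ) *ᵥ x) = star (star ψ ⬝ᵥ x) * (star ψ ⬝ᵥ x) := by
  rw [vecMulVec_mulVec, op_smul_eq_smul, dotProduct_smul, smul_eq_mul, star_dotProduct x ψ,
    mul_comm]

variable [Fintype m] [DecidableEq m]

theorem star_vec_dotProduct_kronecker_one_mulVec_vec (A : Matrix n n 𝕜) (X : Matrix m n 𝕜) :
    star (vec X) ⬝ᵥ ((A ⊗ₖ (1 : Matrix m m 𝕜)) *ᵥ vec X) = trace (Xᴴ * X * Aᵀ) := by
  rw [kronecker_mulVec_vec, star_vec_dotProduct_vec, Matrix.one_mul, Matrix.mul_assoc]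

theorem star_vec_dotProduct_smul_kronecker_one_sub_vecMulVec_mulVec_vec (c : 𝕜)
    (Ψ X : Matrix m n 𝕜) :
    star (vec X) ⬝ᵥ ((c • ((Ψᴴ * Ψ)ᵀ ⊗ₖ (1 : Matrix m m 𝕜)) -
      vecMulVec (vec Ψ) (star (vec Ψ))) *ᵥ vec X) =
      c * trace (Xᴴ * X * (Ψᴴ * Ψ)) - star (trace (Ψᴴ * X)) * trace (Ψᴴ * X) := by
  rw [sub_mulVec, dotProduct_sub, smul_mulVec, dotProduct_smul, smul_eq_mul,
    star_vec_dotProduct_kronecker_one_mulVec_vec, transpose_transpose,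
    star_dotProduct_vecMulVec_star_mulVec, star_vec_dotProduct_vec]

end Matrix

theorem ptraceB_vecMulVec_vec {dA dB : ℕ} (Ψ : Matrix (Fin dB) (Fin dA) ℂ) :
    ptraceB dA dB (vecMulVec (vec Ψ) (star (vec Ψ))) = (Ψᴴ * Ψ)ᵀ := by
  ext a a'
  simp [ptraceB, vecMulVec_apply, mul_apply, mul_comm]

theorem stmt8_general (dA dB k : ℕ)
    (ψ : Fin dA × Fin dB → ℂ)
    (ρ : Matrix (Fin dA × Fin dB) (Fin dA × Fin dB) ℂ)
    (hρ : ρ = Matrix.vecMulVec ψ (star ψ))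
    (r : ℕ) (hr : r = (ptraceB dA dB ρ).rank)
    (R : Matrix (Fin dA × Fin dB) (Fin dA × Fin dB) ℂ)
    (hRdef : R = (k : ℂ) • (ptraceB dA dB ρ ⊗ₖ (1 : Matrix (Fin dB) (Fin dB) ℂ)) - ρ)
    (hR : R.IsHermitian) :
    (r ≤ k → R.PosSemidef) ∧
      (k < r → (Finset.univ.filter fun p => hR.eigenvalues p < 0).card = 1) := by
  obtain ⟨Ψ, rfl⟩ : ∃ Ψ : Matrix (Fin dB) (Fin dA) ℂ, vec Ψ = ψ := ⟨of fun b a => ψ (a, b), rfl⟩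
  rw [hρ, ptraceB_vecMulVec_vec, rank_transpose, rank_conjTranspose_mul_self] at hr
  rw [hρ, ptraceB_vecMulVec_vec] at hRdef
  subst hr
  have hρA : ((Ψᴴ * Ψ)ᵀ ⊗ₖ (1 : Matrix (Fin dB) (Fin dB) ℂ)).PosSemidef :=
    (posSemidef_conjTranspose_mul_self Ψ).transpose.kronecker PosSemidef.one
  have hform (X : Matrix (Fin dB) (Fin dA) ℂ) : star (vec X) ⬝ᵥ (R *ᵥ vec X) =
      k * trace (Xᴴ * X * (Ψᴴ * Ψ)) - star (trace (Ψᴴ * X)) * trace (Ψᴴ * X) := by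
    rw [hRdef, star_vec_dotProduct_smul_kronecker_one_sub_vecMulVec_mulVec_vec]
  constructor
  · intro hrk
    refine PosSemidef.of_dotProduct_mulVec_nonneg hR fun x => ?_
    obtain ⟨X, rfl⟩ := vec_bijective.surjective x
    have hquad : 0 ≤ trace (Xᴴ * X * (Ψᴴ * Ψ)) := by
      simpa [star_vec_dotProduct_kronecker_one_mulVec_vec] using
        hρA.dotProduct_mulVec_nonneg (vec X)
    rw [hform, sub_nonneg]
    calc star (trace (Ψᴴ * X)) * trace (Ψᴴ * X) ≤ Ψ.rank * trace (Xᴴ * X * (Ψᴴ * Ψ)) :=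
          star_trace_mul_trace_le_rank_mul Ψ X
      _ ≤ k * trace (Xᴴ * X * (Ψᴴ * Ψ)) :=
          mul_le_mul_of_nonneg_right (by exact_mod_cast hrk) hquad
  · intro hkr
    obtain ⟨X, htrace, hquad⟩ := exists_trace_conjTranspose_mul_eq_rank Ψ
    obtain ⟨p, hp⟩ := hR.exists_eigenvalues_neg_of_not_nonneg (x := vec X) (by
      rw [hform, htrace, hquad, sub_nonneg]
      exact_mod_cast (Nat.mul_lt_mul_of_pos_right hkr (by omega)).not_ge)
    have hle := hR.card_eigenvalues_neg_le_one (vec Ψ) (by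
      rw [hRdef, sub_add_cancel]
      exact hρA.smul (Nat.cast_nonneg k))
    have hpos : 0 < (Finset.univ.filter fun p => hR.eigenvalues p < 0).card :=
      card_pos.mpr ⟨p, by simpa using hp⟩
    omega

theorem stmt8 (dA dB k : ℕ) (hk : 0 < k)
    (ψ : Fin dA × Fin dB → ℂ) (hnorm : ∑ p, ‖ψ p‖ ^ 2 = 1)
    (ρ : Matrix (Fin dA × Fin dB) (Fin dA × Fin dB) ℂ)
    (hρ : ρ = Matrix.vecMulVec ψ (star ψ))
    (r : ℕ) (hr : r = (ptraceB dA dB ρ).rank)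
    (R : Matrix (Fin dA × Fin dB) (Fin dA × Fin dB) ℂ)
    (hRdef : R = (k : ℂ) • (ptraceB dA dB ρ ⊗ₖ (1 : Matrix (Fin dB) (Fin dB) ℂ)) - ρ)
    (hR : R.IsHermitian) :
    (r ≤ k → R.PosSemidef) ∧
      (k < r → (Finset.univ.filter fun p => hR.eigenvalues p < 0).card = 1) :=
  stmt8_general dA dB k ψ ρ hρ r hr R hRdef hR
end

section
/- Let ρ = (1−ε)|ψ⟩⟨ψ| + ε I/(d_A d_B) be a depolarized pure state, where |ψ⟩ has k-reduction negativity N_k(ψ) (the absolute sum of negative eigenvalues of k ρ^ψ_A ⊗ I − |ψ⟩⟨ψ|). Then the k-reduction negativity of ρ equals (1−ε)N_k(ψ) − ε(d_B k − 1)/(d_A d_B) when ε < ε*, and 0 when ε ≥ ε*, where ε* = d_A d_B N_k(ψ) / (k d_B − 1 + d_A d_B N_k(ψ)). -/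
open Matrix Kronecker ComplexOrder

/-- The k-reduced operator `R_k(σ) = k σ_A ⊗ I_B − σ`. -/
noncomputable def kReduced (dA dB k : ℕ)
    (σ : Matrix (Fin dA × Fin dB) (Fin dA × Fin dB) ℂ) :
    Matrix (Fin dA × Fin dB) (Fin dA × Fin dB) ℂ :=
  (k : ℂ) • (ptraceB dA dB σ ⊗ₖ (1 : Matrix (Fin dB) (Fin dB) ℂ)) - σ

/-- The absolute value of the sum of the negative eigenvalues of a Hermitian matrix. -/
noncomputable def negativity {n : Type*} [Fintype n] [DecidableEq n]
    {A : Matrix n n ℂ} (hA : A.IsHermitian) : ℝ :=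
  -∑ i, min (hA.eigenvalues i) 0

/-! `R_k(ψ) = P - ψψ*` with `P = k ψ_A ⊗ I` positive semidefinite, and by linearity
`R_k(ρ) = (1 - ε) R_k(ψ) + c I = ((1 - ε) P + c I) - (1 - ε) ψψ*`
with `c = ε (k d_B - 1) / (d_A d_B)`.
A Hermitian matrix whose quadratic form is nonnegative on the hyperplane `ψ^⊥` has at most one
negative eigenvalue (two orthonormal negative eigenvectors span a plane meeting `ψ^⊥`), so both
negativities equal `-min λ_min 0`. The affine relation gives
`λ_min(R_k(ρ)) = (1 - ε) λ_min(R_k(ψ)) + c`, which changes sign exactly at `ε = ε*`. -/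

theorem spectrum.smul_add_algebraMap {𝕜 A : Type*} [Field 𝕜] [Ring A] [Algebra 𝕜 A]
    [Nontrivial A] (a : A) (ha : (spectrum 𝕜 a).Nonempty) (s c : 𝕜) :
    spectrum 𝕜 (s • a + algebraMap 𝕜 A c) = (fun x => s * x + c) '' spectrum 𝕜 a := by
  rw [← spectrum.add_singleton_eq, spectrum.smul_eq_smul s a ha, Set.add_singleton,
    ← Set.image_smul, Set.image_image]
  rfl

section Hermitian

variable {n : Type*} [Fintype n] [DecidableEq n]

theorem Matrix.IsHermitian.range_eigenvalues_of_eq_smul_add [Nonempty n] {A B : Matrix n n ℂ}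
    (hA : A.IsHermitian) (hB : B.IsHermitian) {s c : ℝ}
    (hAB : A = (s : ℂ) • B + (c : ℂ) • 1) :
    Set.range hA.eigenvalues = (fun x => s * x + c) '' Set.range hB.eigenvalues := by
  have hBne : (spectrum ℝ B).Nonempty := by
    rw [hB.spectrum_real_eq_range_eigenvalues]; exact Set.range_nonempty _
  rw [← hA.spectrum_real_eq_range_eigenvalues, ← hB.spectrum_real_eq_range_eigenvalues,
    ← spectrum.smul_add_algebraMap B hBne, hAB, Algebra.algebraMap_eq_smul_one]
  simp [Complex.coe_smul]

theorem Matrix.IsHermitian.star_dotProduct_mulVec_eigenvectorBasis_add {A : Matrix n n ℂ}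
    (hA : A.IsHermitian) {i j : n} (hij : i ≠ j) (α β : ℂ) :
    let x : n → ℂ := α • ⇑(hA.eigenvectorBasis i) + β • ⇑(hA.eigenvectorBasis j)
    star x ⬝ᵥ (A *ᵥ x) =
      ((Complex.normSq α * hA.eigenvalues i + Complex.normSq β * hA.eigenvalues j : ℝ) : ℂ) := by
  have hdot (k l : n) : star ⇑(hA.eigenvectorBasis k) ⬝ᵥ ⇑(hA.eigenvectorBasis l) =
      if k = l then 1 else 0 := by
    rw [dotProduct_comm, ← EuclideanSpace.inner_eq_star_dotProduct]
    exact orthonormal_iff_ite.mp hA.eigenvectorBasis.orthonormal k l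
  simp only [mulVec_add, mulVec_smul, hA.mulVec_eigenvectorBasis, star_add, star_smul,
    add_dotProduct, dotProduct_add, smul_dotProduct, dotProduct_smul, hdot, hij, hij.symm,
    if_true, if_false, smul_eq_mul, mul_one, mul_zero, add_zero, zero_add, Complex.real_smul,
    RCLike.star_def]
  push_cast
  rw [Complex.normSq_eq_conj_mul_self, Complex.normSq_eq_conj_mul_self]
  ring

theorem Matrix.IsHermitian.subsingleton_eigenvalues_neg_of_nonneg_on_orthogonal
    {A : Matrix n n ℂ} (hA : A.IsHermitian) (v : n → ℂ)
    (hv : ∀ x, star v ⬝ᵥ x = 0 → 0 ≤ star x ⬝ᵥ (A *ᵥ x)) :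
    {i | hA.eigenvalues i < 0}.Subsingleton := by
  intro i hi j hj
  by_contra hij
  set a := star v ⬝ᵥ ⇑(hA.eigenvectorBasis i)
  set b := star v ⬝ᵥ ⇑(hA.eigenvectorBasis j)
  obtain ⟨α, β, hαβ, horth⟩ : ∃ α β : ℂ, (α ≠ 0 ∨ β ≠ 0) ∧ α * a + β * b = 0 := by
    by_cases ha : a = 0
    · exact ⟨1, 0, by simp, by simp [ha]⟩
    · exact ⟨b, -a, Or.inr (neg_ne_zero.mpr ha), by ring⟩
  have hx := hv (α • ⇑(hA.eigenvectorBasis i) + β • ⇑(hA.eigenvectorBasis j))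
    (by simpa only [dotProduct_add, dotProduct_smul, smul_eq_mul, mul_comm] using horth)
  rw [hA.star_dotProduct_mulVec_eigenvectorBasis_add hij, Complex.zero_le_real] at hx
  have hi' : hA.eigenvalues i < 0 := hi
  have hj' : hA.eigenvalues j < 0 := hj
  rcases hαβ with hα | hβ
  · nlinarith [Complex.normSq_pos.mpr hα, Complex.normSq_nonneg β]
  · nlinarith [Complex.normSq_pos.mpr hβ, Complex.normSq_nonneg α]

theorem Matrix.PosSemidef.subsingleton_eigenvalues_neg_of_eq_sub_vecMulVec
    {A P : Matrix n n ℂ} (hA : A.IsHermitian) (hP : P.PosSemidef) (v : n → ℂ) {t : ℝ}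
    (hAP : A = P - (t : ℂ) • vecMulVec v (star v)) :
    {i | hA.eigenvalues i < 0}.Subsingleton :=
  hA.subsingleton_eigenvalues_neg_of_nonneg_on_orthogonal v fun x hx => by
    simpa [hAP, sub_mulVec, smul_mulVec, vecMulVec_mulVec, hx] using hP.dotProduct_mulVec_nonneg x

theorem negativity_eq_neg_min_of_isLeast {A : Matrix n n ℂ} (hA : A.IsHermitian)
    (hneg : {i | hA.eigenvalues i < 0}.Subsingleton) {m : ℝ}
    (hm : IsLeast (Set.range hA.eigenvalues) m) :
    negativity hA = -min m 0 := by
  obtain ⟨⟨i₀, hi₀⟩, hle⟩ := hm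
  rw [negativity, neg_inj]
  rcases lt_or_ge m 0 with hm0 | hm0
  · rw [Finset.sum_eq_single i₀ (fun j _ hj => min_eq_right ?_) (by simp), hi₀]
    by_contra! hj0
    exact hj (hneg hj0 (show hA.eigenvalues i₀ < 0 from hi₀ ▸ hm0))
  · rw [min_eq_right hm0]
    exact Finset.sum_eq_zero fun j _ => min_eq_right (hm0.trans (hle ⟨j, rfl⟩))

end Hermitian

section PartialTrace

variable {dA dB : ℕ}

theorem ptraceB_add (σ τ : Matrix (Fin dA × Fin dB) (Fin dA × Fin dB) ℂ) :
    ptraceB dA dB (σ + τ) = ptraceB dA dB σ + ptraceB dA dB τ := by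
  ext a a'
  simp [ptraceB, Finset.sum_add_distrib]

theorem ptraceB_smul (c : ℂ) (σ : Matrix (Fin dA × Fin dB) (Fin dA × Fin dB) ℂ) :
    ptraceB dA dB (c • σ) = c • ptraceB dA dB σ := by
  ext a a'
  simp [ptraceB, Finset.mul_sum]

theorem ptraceB_one : ptraceB dA dB 1 = (dB : ℂ) • 1 := by
  ext a a'
  by_cases h : a = a' <;> simp [ptraceB, one_apply, h]

theorem ptraceB_eq_sum_submatrix (σ : Matrix (Fin dA × Fin dB) (Fin dA × Fin dB) ℂ) :
    ptraceB dA dB σ = ∑ b, σ.submatrix (·, b) (·, b) := by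
  ext a a'
  simp [ptraceB, Matrix.sum_apply]

theorem Matrix.PosSemidef.ptraceB {σ : Matrix (Fin dA × Fin dB) (Fin dA × Fin dB) ℂ}
    (hσ : σ.PosSemidef) : (_root_.ptraceB dA dB σ).PosSemidef := by
  rw [ptraceB_eq_sum_submatrix]
  exact posSemidef_sum _ fun b _ => hσ.submatrix _

variable (k : ℕ)

theorem kReduced_smul_add_smul_one (a c : ℂ)
    (σ : Matrix (Fin dA × Fin dB) (Fin dA × Fin dB) ℂ) :
    kReduced dA dB k (a • σ + c • 1) = a • kReduced dA dB k σ + (c * (k * dB - 1)) • 1 := by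
  simp only [kReduced, ptraceB_add, ptraceB_smul, ptraceB_one, add_kronecker, smul_kronecker,
    one_kronecker_one]
  module

theorem Matrix.PosSemidef.smul_ptraceB_kronecker_one
    {σ : Matrix (Fin dA × Fin dB) (Fin dA × Fin dB) ℂ} (hσ : σ.PosSemidef) :
    ((k : ℂ) • (_root_.ptraceB dA dB σ ⊗ₖ (1 : Matrix (Fin dB) (Fin dB) ℂ))).PosSemidef :=
  (hσ.ptraceB.kronecker PosSemidef.one).smul (by positivity)

end PartialTrace

theorem neg_min_smul_add_eq_ite {m ε D K : ℝ} (hD : 0 < D) (hK : 0 ≤ K)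
    (hε0 : 0 ≤ ε) (hε1 : ε ≤ 1) :
    -min ((1 - ε) * m + ε * K / D) 0 =
      if ε < D * -min m 0 / (K + D * -min m 0) then (1 - ε) * -min m 0 - ε * K / D else 0 := by
  have hεK : 0 ≤ ε * K / D := by positivity
  rcases lt_or_ge m 0 with hm | hm
  · have hden : 0 < K + D * -m := by nlinarith
    rw [min_eq_left hm.le]
    split_ifs with hε
    · have : ε * K / D < (1 - ε) * -m := by
        rw [lt_div_iff₀ hden] at hε
        rw [div_lt_iff₀ hD]
        nlinarith
      rw [min_eq_left (by linarith)]
      ring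
    · have : (1 - ε) * -m ≤ ε * K / D := by
        rw [not_lt, div_le_iff₀ hden] at hε
        rw [le_div_iff₀ hD]
        nlinarith
      rw [min_eq_right (by linarith), neg_zero]
  · have : 0 ≤ (1 - ε) * m := mul_nonneg (by linarith) hm
    rw [min_eq_right hm, min_eq_right (by linarith), neg_zero, mul_zero, zero_div,
      if_neg hε0.not_gt]

theorem stmt10_general (dA dB k : ℕ) (hk : 0 < k) (hdA : 0 < dA) (hdB : 0 < dB)
    (ε : ℝ) (hε0 : 0 ≤ ε) (hε1 : ε ≤ 1)
    (ψ : Fin dA × Fin dB → ℂ)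
    (ρ : Matrix (Fin dA × Fin dB) (Fin dA × Fin dB) ℂ)
    (hρ : ρ = ((1 - ε : ℝ) : ℂ) • Matrix.vecMulVec ψ (star ψ)
      + ((ε / (dA * dB) : ℝ) : ℂ) • (1 : Matrix (Fin dA × Fin dB) (Fin dA × Fin dB) ℂ))
    (hRψ : (kReduced dA dB k (Matrix.vecMulVec ψ (star ψ))).IsHermitian)
    (hRρ : (kReduced dA dB k ρ).IsHermitian) :
    negativity hRρ =
      if ε < (dA * dB * negativity hRψ) / (k * dB - 1 + dA * dB * negativity hRψ) then
        (1 - ε) * negativity hRψ - ε * (dB * k - 1) / (dA * dB)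
      else 0 := by
  have : Nonempty (Fin dA × Fin dB) := ⟨(⟨0, hdA⟩, ⟨0, hdB⟩)⟩
  have hK : (0 : ℝ) ≤ k * dB - 1 := by
    have : (1 : ℝ) ≤ k * dB := by exact_mod_cast Nat.mul_pos hk hdB
    linarith
  set c : ℝ := ε * (k * dB - 1) / (dA * dB)
  have hP := (posSemidef_vecMulVec_self_star ψ).smul_ptraceB_kronecker_one k
  have hRρ_eq : kReduced dA dB k ρ =
      ((1 - ε : ℝ) : ℂ) • kReduced dA dB k (vecMulVec ψ (star ψ)) + (c : ℂ) • 1 := by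
    rw [hρ, kReduced_smul_add_smul_one]
    push_cast [c]
    ring_nf
  obtain ⟨i₀, hi₀⟩ := Finite.exists_min hRψ.eigenvalues
  have hmψ : IsLeast (Set.range hRψ.eigenvalues) (hRψ.eigenvalues i₀) :=
    ⟨⟨i₀, rfl⟩, by rintro _ ⟨j, rfl⟩; exact hi₀ j⟩
  have hmρ : IsLeast (Set.range hRρ.eigenvalues) ((1 - ε) * hRψ.eigenvalues i₀ + c) := by
    rw [hRρ.range_eigenvalues_of_eq_smul_add hRψ hRρ_eq]
    exact Monotone.map_isLeast (fun x y h => by gcongr) hmψ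
  have hnegψ := hP.subsingleton_eigenvalues_neg_of_eq_sub_vecMulVec hRψ ψ (t := 1)
    (by rw [Complex.ofReal_one, one_smul]; rfl)
  have h1ε : (0 : ℂ) ≤ ((1 - ε : ℝ) : ℂ) := Complex.zero_le_real.mpr (by linarith)
  have hc : (0 : ℂ) ≤ (c : ℂ) := Complex.zero_le_real.mpr (by positivity)
  have hPρ := (hP.smul h1ε).add (PosSemidef.one.smul hc)
  have hnegρ := hPρ.subsingleton_eigenvalues_neg_of_eq_sub_vecMulVec hRρ ψ (t := 1 - ε)
    (by rw [hRρ_eq]; simp only [kReduced]; module)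
  rw [negativity_eq_neg_min_of_isLeast hRρ hnegρ hmρ,
    negativity_eq_neg_min_of_isLeast hRψ hnegψ hmψ, mul_comm (dB : ℝ)]
  exact neg_min_smul_add_eq_ite (by positivity) hK hε0 hε1

theorem stmt10 (dA dB k : ℕ) (hk : 0 < k) (hdA : 0 < dA) (hdB : 0 < dB)
    (ε : ℝ) (hε0 : 0 ≤ ε) (hε1 : ε ≤ 1)
    (ψ : Fin dA × Fin dB → ℂ) (hnorm : ∑ p, ‖ψ p‖ ^ 2 = 1)
    (ρ : Matrix (Fin dA × Fin dB) (Fin dA × Fin dB) ℂ)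
    (hρ : ρ = ((1 - ε : ℝ) : ℂ) • Matrix.vecMulVec ψ (star ψ)
      + ((ε / (dA * dB) : ℝ) : ℂ) • (1 : Matrix (Fin dA × Fin dB) (Fin dA × Fin dB) ℂ))
    (hRψ : (kReduced dA dB k (Matrix.vecMulVec ψ (star ψ))).IsHermitian)
    (hRρ : (kReduced dA dB k ρ).IsHermitian) :
    negativity hRρ =
      if ε < (dA * dB * negativity hRψ) / (k * dB - 1 + dA * dB * negativity hRψ) then
        (1 - ε) * negativity hRψ - ε * (dB * k - 1) / (dA * dB)
      else 0 :=
  stmt10_general dA dB k hk hdA hdB ε hε0 hε1 ψ ρ hρ hRψ hRρ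
end

section
/- Let ρ_{ε,r} = (1−ε)|+_r⟩⟨+_r| + ε I/(d_A d_B) where |+_r⟩ = (1/√r)∑_{i<r}|ii⟩. If r ≤ √d_A and ε < 1/2 then the Schmidt number of ρ_{ε,r} equals r. -/
/-!
The upper bound is read off the definition of `ρ`: it mixes `|+_r⟩`, of Schmidt rank `r`, with
product basis states.

For the lower bound take the witness `W = m Π - r |+_r⟩⟨+_r|`, where `Π` projects onto the
span of the `|ij⟩` with `i, j < r`. If a pure state `v` has Schmidt rank at most `m` and `C` is
the top-left `r × r` block of its coefficient matrix, then
`r |⟨+_r|v⟩|² = |tr C|² ≤ rank C · ‖C‖²_F ≤ m ⟨v|Π|v⟩`, the middle step being Cauchy–Schwarz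
against the orthogonal projection onto the column space of `C`. Hence `tr (W ρ) ≥ 0` whenever
`ρ` has Schmidt number at most `m`, whereas for our state
`tr (W ρ) = (1 - ε)(m - r) + ε (m r² - r) / (d_A d_B)`, which is negative when `m < r`,
`r² ≤ d_A ≤ d_B` and `ε < 1/2`.
-/

open Matrix

/-- `ρ` has Schmidt number at most `m`: it is a nonnegative combination of pure states
each of Schmidt rank at most `m` (the Schmidt rank of a pure state being the rank of
the matrix of its coefficients). -/
noncomputable def HasSchmidtNumberLE (dA dB : ℕ)
    (ρ : Matrix (Fin dA × Fin dB) (Fin dA × Fin dB) ℂ) (m : ℕ) : Prop :=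
  ∃ (n : ℕ) (c : Fin n → ℝ) (v : Fin n → (Fin dA × Fin dB → ℂ)),
    (∀ i, 0 ≤ c i) ∧
    ρ = ∑ i, ((c i : ℂ)) • Matrix.vecMulVec (v i) (star (v i)) ∧
    ∀ i, (Matrix.of fun a b => v i (a, b)).rank ≤ m

/-- The Schmidt number of a mixed state. -/
noncomputable def schmidtNumber (dA dB : ℕ)
    (ρ : Matrix (Fin dA × Fin dB) (Fin dA × Fin dB) ℂ) : ℕ :=
  sInf {m | HasSchmidtNumberLE dA dB ρ m}

/-- The rank-`r` maximally entangled state `|+_r⟩ = (1/√r) ∑_{i<r} |ii⟩`. -/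
noncomputable def plusState (dA dB r : ℕ) : Fin dA × Fin dB → ℂ :=
  fun p => if (p.1 : ℕ) = (p.2 : ℕ) ∧ (p.1 : ℕ) < r then (1 / Real.sqrt r : ℝ) else 0

section TraceRank

variable {𝕜 ι m n : Type*} [RCLike 𝕜]

theorem Finset.norm_sum_mul_sq_le (s : Finset ι) (f g : ι → 𝕜) :
    ‖∑ i ∈ s, f i * g i‖ ^ 2 ≤ (∑ i ∈ s, ‖f i‖ ^ 2) * ∑ i ∈ s, ‖g i‖ ^ 2 :=
  calc ‖∑ i ∈ s, f i * g i‖ ^ 2 ≤ (∑ i ∈ s, ‖f i‖ * ‖g i‖) ^ 2 := by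
        gcongr
        exact (norm_sum_le _ _).trans_eq (by simp only [norm_mul])
    _ ≤ _ := Finset.sum_mul_sq_le_sq_mul_sq _ _ _

variable [Fintype m] [Fintype n]

theorem Matrix.trace_conjTranspose_mul (A B : Matrix m n 𝕜) :
    (Aᴴ * B).trace = ∑ i, ∑ j, star (A i j) * B i j := by
  simp only [trace, diag_apply, mul_apply, conjTranspose_apply]
  exact Finset.sum_comm

theorem Matrix.norm_trace_conjTranspose_mul_sq_le (A B : Matrix m n 𝕜) :
    ‖(Aᴴ * B).trace‖ ^ 2 ≤ (∑ i, ∑ j, ‖A i j‖ ^ 2) * ∑ i, ∑ j, ‖B i j‖ ^ 2 := by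
  simpa only [trace_conjTranspose_mul, ← Fintype.sum_prod_type', norm_star] using
    Finset.norm_sum_mul_sq_le Finset.univ (fun p : m × n => star (A p.1 p.2)) (fun p => B p.1 p.2)

theorem Matrix.trace_conjTranspose_mul_self (A : Matrix m n 𝕜) :
    (Aᴴ * A).trace = ((∑ i, ∑ j, ‖A i j‖ ^ 2 : ℝ) : 𝕜) := by
  simp [trace_conjTranspose_mul, RCLike.star_def, RCLike.conj_mul]

variable [DecidableEq n]

theorem Matrix.exists_isStarProjection_mul_eq_self (A : Matrix n n 𝕜) :
    ∃ P : Matrix n n 𝕜, IsStarProjection P ∧ P * A = A ∧ P.trace = A.rank := by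
  let Φ := toEuclideanCLM (n := n) (𝕜 := 𝕜)
  let U := (Φ A).range
  have hU : IsStarProjection U.starProjection := isStarProjection_starProjection
  refine ⟨Φ.symm U.starProjection, ⟨hU.isIdempotentElem.map Φ.symm, hU.isSelfAdjoint.map Φ.symm⟩,
    ?_, ?_⟩
  · have h : U.starProjection * Φ A = Φ A := by
      ext1 x
      exact Submodule.starProjection_eq_self_iff.2 (LinearMap.mem_range_self _ _)
    simpa using congrArg Φ.symm h
  · have hproj : LinearMap.IsProj U (U.starProjection : EuclideanSpace 𝕜 n →ₗ[𝕜] _) :=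
      ⟨U.starProjection_apply_mem, fun _ hx => Submodule.starProjection_eq_self_iff.2 hx⟩
    have htrace := hproj.trace
    rw [LinearMap.trace_eq_matrix_trace 𝕜 (EuclideanSpace.basisFun n 𝕜).toBasis] at htrace
    have hrank : A.rank = Module.finrank 𝕜 U :=
      A.rank_eq_finrank_range_toLin (EuclideanSpace.basisFun n 𝕜).toBasis
        (EuclideanSpace.basisFun n 𝕜).toBasis
    rw [hrank, ← htrace]
    rfl

theorem Matrix.norm_trace_sq_le_rank_mul (A : Matrix n n 𝕜) :
    ‖A.trace‖ ^ 2 ≤ A.rank * ∑ i, ∑ j, ‖A i j‖ ^ 2 := by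
  obtain ⟨P, hP, hPA, htrace⟩ := A.exists_isStarProjection_mul_eq_self
  have hPH : Pᴴ = P := hP.isSelfAdjoint
  have hnormP : ∑ i, ∑ j, ‖P i j‖ ^ 2 = A.rank := by
    have h := P.trace_conjTranspose_mul_self
    rw [hPH, hP.isIdempotentElem.eq, htrace] at h
    exact_mod_cast h.symm
  calc ‖A.trace‖ ^ 2 = ‖(Pᴴ * A).trace‖ ^ 2 := by rw [hPH, hPA]
    _ ≤ _ := norm_trace_conjTranspose_mul_sq_le P A
    _ = _ := by rw [hnormP]

end TraceRank

theorem Matrix.trace_mul_vecMulVec {R m n : Type*} [CommSemiring R] [Fintype m] [Fintype n]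
    (W : Matrix n m R) (v : m → R) (w : n → R) :
    (W * vecMulVec v w).trace = w ⬝ᵥ (W *ᵥ v) := by
  rw [mul_vecMulVec, trace_vecMulVec, dotProduct_comm]

theorem Fintype.sum_ite_eq_sum_embedding {ι κ M : Type*} [Fintype ι] [Fintype κ]
    [AddCommMonoid M] (e : κ ↪ ι) (P : ι → Prop) [DecidablePred P]
    (hP : ∀ x, P x ↔ x ∈ Set.range e) (f : ι → M) :
    ∑ x, (if P x then f x else 0) = ∑ k, f (e k) := by
  rw [← Finset.sum_filter]
  have : Finset.univ.filter P = Finset.univ.map e := by ext; simp [hP]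
  rw [this, Finset.sum_map]

section SchmidtNumber

variable {dA dB m : ℕ}

theorem hasSchmidtNumberLE_sum {κ : Type*} [Fintype κ] (c : κ → ℝ)
    (v : κ → Fin dA × Fin dB → ℂ) (hc : ∀ k, 0 ≤ c k)
    (hv : ∀ k, (of fun a b => v k (a, b)).rank ≤ m) :
    HasSchmidtNumberLE dA dB (∑ k, (c k : ℂ) • vecMulVec (v k) (star (v k))) m :=
  let e := Fintype.equivFin κ
  ⟨Fintype.card κ, c ∘ e.symm, v ∘ e.symm, fun _ => hc _,
    (e.symm.sum_comp fun k => (c k : ℂ) • vecMulVec (v k) (star (v k))).symm, fun _ => hv _⟩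

theorem HasSchmidtNumberLE.re_trace_mul_nonneg {ρ : Matrix (Fin dA × Fin dB) (Fin dA × Fin dB) ℂ}
    (hρ : HasSchmidtNumberLE dA dB ρ m) (W : Matrix (Fin dA × Fin dB) (Fin dA × Fin dB) ℂ)
    (hW : ∀ v : Fin dA × Fin dB → ℂ,
      (of fun a b => v (a, b)).rank ≤ m → 0 ≤ (star v ⬝ᵥ (W *ᵥ v)).re) :
    0 ≤ (W * ρ).trace.re := by
  obtain ⟨n, c, v, hc, rfl, hv⟩ := hρ
  simp only [Matrix.mul_sum, trace_sum, Matrix.mul_smul, trace_smul, trace_mul_vecMulVec,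
    smul_eq_mul, Complex.re_sum, Complex.re_ofReal_mul]
  exact Finset.sum_nonneg fun i _ => mul_nonneg (hc i) (hW _ (hv i))

end SchmidtNumber

section PlusState

variable {dA dB r : ℕ}

theorem star_plusState : star (plusState dA dB r) = plusState dA dB r := by
  funext p
  simp only [Pi.star_apply, plusState]
  split_ifs <;> simp

theorem rank_plusState_le : (of fun a b => plusState dA dB r (a, b)).rank ≤ r := by
  let B : Matrix (Fin dA) (Fin r) ℂ := of fun a j => if (a : ℕ) = j then 1 else 0
  let C : Matrix (Fin r) (Fin dB) ℂ :=
    of fun j b => if (j : ℕ) = b then ((1 / Real.sqrt r : ℝ) : ℂ) else 0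
  have hBC : (of fun a b => plusState dA dB r (a, b)) = B * C := by
    ext a b
    simp only [of_apply, mul_apply, B, C, plusState]
    by_cases har : (a : ℕ) < r
    · have hoff (j : Fin r) (hj : j ≠ ⟨a, har⟩) : (a : ℕ) ≠ j := fun h => hj (Fin.ext h.symm)
      rw [Finset.sum_eq_single ⟨a, har⟩ (fun j _ hj => by simp [hoff j hj]) (by simp)]
      simp [har]
    · rw [Finset.sum_eq_zero fun j _ => by simp [show (a : ℕ) ≠ j by omega], if_neg (by tauto)]
  rw [hBC]
  calc (B * C).rank ≤ C.rank := rank_mul_le_right B C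
    _ ≤ r := (rank_le_card_height C).trans_eq (Fintype.card_fin r)

theorem hasSchmidtNumberLE_plusState_add_one {a b : ℝ} (ha : 0 ≤ a) (hb : 0 ≤ b) (hr : 0 < r) :
    HasSchmidtNumberLE dA dB ((a : ℂ) • vecMulVec (plusState dA dB r) (star (plusState dA dB r))
      + (b : ℂ) • 1) r := by
  let c : Option (Fin dA × Fin dB) → ℝ := fun o => o.elim a fun _ => b
  let v : Option (Fin dA × Fin dB) → Fin dA × Fin dB → ℂ :=
    fun o => o.elim (plusState dA dB r) fun p => Pi.single p 1
  have hsum : (a : ℂ) • vecMulVec (plusState dA dB r) (star (plusState dA dB r)) + (b : ℂ) • 1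
      = ∑ o, (c o : ℂ) • vecMulVec (v o) (star (v o)) := by
    rw [Fintype.sum_option, ← sum_single_one, Finset.smul_sum]
    simp [c, v, Pi.star_single, ← single_eq_single_vecMulVec_single]
  rw [hsum]
  refine hasSchmidtNumberLE_sum c v (fun o => o.rec ha fun _ => hb) fun o => ?_
  cases o with
  | none => exact rank_plusState_le
  | some p =>
    calc (of fun a' b' => (Pi.single p 1 : Fin dA × Fin dB → ℂ) (a', b')).rank
        = (vecMulVec (Pi.single p.1 1) (Pi.single p.2 1) : Matrix _ _ ℂ).rank := by
          congr 1
          ext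
          simp [← single_eq_single_vecMulVec_single, single, Pi.single_apply, Prod.ext_iff,
            eq_comm]
      _ ≤ r := (rank_vecMulVec_le _ _).trans hr

end PlusState

section Witness

variable {dA dB r : ℕ} (hA : r ≤ dA) (hB : r ≤ dB)

def diagEmb : Fin r ↪ Fin dA × Fin dB :=
  ⟨fun j => (Fin.castLE hA j, Fin.castLE hB j),
    fun _ _ h => Fin.castLE_injective hA (congrArg Prod.fst h)⟩

theorem mem_range_diagEmb_iff (p : Fin dA × Fin dB) :
    p ∈ Set.range (diagEmb hA hB) ↔ (p.1 : ℕ) = p.2 ∧ (p.1 : ℕ) < r := by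
  constructor
  · rintro ⟨j, rfl⟩; exact ⟨rfl, j.isLt⟩
  · rintro ⟨h1, h2⟩; exact ⟨⟨p.1, h2⟩, Prod.ext (Fin.ext rfl) (Fin.ext h1)⟩

def cornerBlock (v : Fin dA × Fin dB → ℂ) : Matrix (Fin r) (Fin r) ℂ :=
  (of fun a b => v (a, b)).submatrix (Fin.castLE hA) (Fin.castLE hB)

variable (dA dB r) in
def cornerProj : Matrix (Fin dA × Fin dB) (Fin dA × Fin dB) ℂ :=
  diagonal fun p => if (p.1 : ℕ) < r ∧ (p.2 : ℕ) < r then 1 else 0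

variable (dA dB r) in
noncomputable def schmidtWitness (m : ℕ) : Matrix (Fin dA × Fin dB) (Fin dA × Fin dB) ℂ :=
  (m : ℂ) • cornerProj dA dB r - (r : ℂ) • vecMulVec (plusState dA dB r) (star (plusState dA dB r))

theorem star_plusState_dotProduct (v : Fin dA × Fin dB → ℂ) :
    star (plusState dA dB r) ⬝ᵥ v = ((1 / Real.sqrt r : ℝ) : ℂ) * (cornerBlock hA hB v).trace := by
  rw [star_plusState]
  simp only [dotProduct, plusState, ite_mul, zero_mul]
  rw [Fintype.sum_ite_eq_sum_embedding (diagEmb hA hB) _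
    fun p => (mem_range_diagEmb_iff hA hB p).symm, ← Finset.mul_sum]
  rfl

theorem star_dotProduct_cornerProj_mulVec (v : Fin dA × Fin dB → ℂ) :
    star v ⬝ᵥ (cornerProj dA dB r *ᵥ v) = ((cornerBlock hA hB v)ᴴ * cornerBlock hA hB v).trace := by
  simp only [cornerProj, mulVec_diagonal, dotProduct, Pi.star_apply, ite_mul, one_mul, zero_mul,
    mul_ite, mul_zero]
  rw [Fintype.sum_ite_eq_sum_embedding ((Fin.castLEEmb hA).prodMap (Fin.castLEEmb hB)) _
    (by simp), trace_conjTranspose_mul, Fintype.sum_prod_type]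
  rfl

theorem cornerProj_mulVec_plusState :
    cornerProj dA dB r *ᵥ plusState dA dB r = plusState dA dB r := by
  funext p
  simp only [cornerProj, mulVec_diagonal, plusState]
  split_ifs <;> simp_all
  omega

include hA hB in
theorem star_plusState_dotProduct_self (hr : 0 < r) :
    star (plusState dA dB r) ⬝ᵥ plusState dA dB r = 1 := by
  rw [star_plusState_dotProduct hA hB]
  have hs : (Real.sqrt r : ℂ) ^ 2 = r := by exact_mod_cast Real.sq_sqrt (Nat.cast_nonneg r)
  have hs0 : (Real.sqrt r : ℂ) ≠ 0 := by
    exact_mod_cast (Real.sqrt_pos.2 (Nat.cast_pos.2 hr)).ne'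
  simp [cornerBlock, trace, plusState]
  field_simp
  exact hs.symm

include hA hB in
theorem trace_cornerProj : (cornerProj dA dB r).trace = r * r := by
  rw [cornerProj, trace_diagonal, Fintype.sum_ite_eq_sum_embedding
    ((Fin.castLEEmb hA).prodMap (Fin.castLEEmb hB)) _ (by simp)]
  simp

theorem star_dotProduct_schmidtWitness_mulVec (m : ℕ) (v : Fin dA × Fin dB → ℂ) :
    star v ⬝ᵥ (schmidtWitness dA dB r m *ᵥ v) = m * (star v ⬝ᵥ (cornerProj dA dB r *ᵥ v))
      - r * ((‖star (plusState dA dB r) ⬝ᵥ v‖ ^ 2 : ℝ) : ℂ) := by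
  simp only [schmidtWitness, sub_mulVec, smul_mulVec, vecMulVec_mulVec, dotProduct_sub,
    dotProduct_smul, smul_eq_mul, op_smul_eq_smul]
  rw [star_dotProduct (v := v) (w := plusState dA dB r), Complex.star_def, Complex.mul_conj']
  push_cast
  rfl

include hA hB in
theorem re_star_dotProduct_schmidtWitness_mulVec_nonneg (hr : 0 < r) {m : ℕ}
    (v : Fin dA × Fin dB → ℂ) (hv : (of fun a b => v (a, b)).rank ≤ m) :
    0 ≤ (star v ⬝ᵥ (schmidtWitness dA dB r m *ᵥ v)).re := by
  set C := cornerBlock hA hB v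
  have hC : C.rank ≤ m := (rank_submatrix_le _ _ _).trans hv
  have hfid : (r : ℝ) * ‖star (plusState dA dB r) ⬝ᵥ v‖ ^ 2 = ‖C.trace‖ ^ 2 := by
    rw [star_plusState_dotProduct hA hB, norm_mul, mul_pow, Complex.norm_real, Real.norm_eq_abs,
      sq_abs, div_pow, one_pow, Real.sq_sqrt (Nat.cast_nonneg r), ← mul_assoc,
      mul_one_div_cancel (Nat.cast_pos.2 hr).ne', one_mul]
  have hreal : star v ⬝ᵥ (schmidtWitness dA dB r m *ᵥ v)
      = ((m * ∑ i, ∑ j, ‖C i j‖ ^ 2 - r * ‖star (plusState dA dB r) ⬝ᵥ v‖ ^ 2 : ℝ) : ℂ) := by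
    rw [star_dotProduct_schmidtWitness_mulVec, star_dotProduct_cornerProj_mulVec hA hB,
      trace_conjTranspose_mul_self]
    push_cast
    rfl
  rw [hreal, Complex.ofReal_re, hfid, sub_nonneg]
  calc ‖C.trace‖ ^ 2 ≤ C.rank * ∑ i, ∑ j, ‖C i j‖ ^ 2 := C.norm_trace_sq_le_rank_mul
    _ ≤ m * ∑ i, ∑ j, ‖C i j‖ ^ 2 := by gcongr

include hA hB in
theorem trace_schmidtWitness_mul (hr : 0 < r) (m : ℕ) (a b : ℝ) :
    (schmidtWitness dA dB r m * ((a : ℂ) • vecMulVec (plusState dA dB r)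
      (star (plusState dA dB r)) + (b : ℂ) • 1)).trace
      = ((a * (m - r) + b * (m * (r * r) - r) : ℝ) : ℂ) := by
  have hnorm := star_plusState_dotProduct_self hA hB hr
  have hpure : (schmidtWitness dA dB r m * vecMulVec (plusState dA dB r)
      (star (plusState dA dB r))).trace = m - r := by
    rw [trace_mul_vecMulVec, star_dotProduct_schmidtWitness_mulVec, cornerProj_mulVec_plusState,
      hnorm]
    simp
  have hW : (schmidtWitness dA dB r m).trace = m * (r * r) - r := by
    rw [schmidtWitness, trace_sub, trace_smul, trace_smul, trace_cornerProj hA hB, trace_vecMulVec,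
      dotProduct_comm, hnorm]
    simp
  rw [Matrix.mul_add, Matrix.mul_smul, Matrix.mul_smul, Matrix.mul_one, trace_add, trace_smul,
    trace_smul, hpure, hW]
  push_cast
  ring

end Witness

theorem re_trace_schmidtWitness_mul_lt_zero {dA dB r m : ℕ} {ε : ℝ} (hmr : m < r)
    (hrdA : r * r ≤ dA) (hdAdB : dA ≤ dB) (hε0 : 0 ≤ ε) (hε : ε < 1 / 2) :
    (schmidtWitness dA dB r m * (((1 - ε : ℝ) : ℂ) • vecMulVec (plusState dA dB r)
      (star (plusState dA dB r)) + ((ε / (dA * dB) : ℝ) : ℂ) • 1)).trace.re < 0 := by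
  have hr : 0 < r := (Nat.zero_le m).trans_lt hmr
  have hA : r ≤ dA := (Nat.le_mul_of_pos_left r hr).trans hrdA
  rw [trace_schmidtWitness_mul hA (hA.trans hdAdB) hr, Complex.ofReal_re]
  have hdA : (0 : ℝ) < dA := by exact_mod_cast (Nat.mul_pos hr hr).trans_le hrdA
  have hdB : (0 : ℝ) < dB := hdA.trans_le (by exact_mod_cast hdAdB)
  set y := ε / (dA * dB)
  have hy : y * (dA * dB) = ε := div_mul_cancel₀ ε (by positivity)
  have hm : (m : ℝ) + 1 ≤ r := by exact_mod_cast hmr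
  have hrr : (r : ℝ) * r ≤ dA := by exact_mod_cast hrdA
  have hnoise : y * (m * (r * r) - r) ≤ ε :=
    calc y * (m * (r * r) - r) ≤ y * (r * dA) := by gcongr; nlinarith
      _ ≤ y * (dA * dB) := by gcongr
      _ = ε := hy
  nlinarith

theorem stmt11 (dA dB r : ℕ) (hr : 0 < r) (hdAdB : dA ≤ dB)
    (hrdA : r * r ≤ dA) (ε : ℝ) (hε0 : 0 ≤ ε) (hε : ε < 1 / 2)
    (ρ : Matrix (Fin dA × Fin dB) (Fin dA × Fin dB) ℂ)
    (hρ : ρ = ((1 - ε : ℝ) : ℂ) • Matrix.vecMulVec (plusState dA dB r) (star (plusState dA dB r))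
      + ((ε / (dA * dB) : ℝ) : ℂ) • (1 : Matrix (Fin dA × Fin dB) (Fin dA × Fin dB) ℂ)) :
    schmidtNumber dA dB ρ = r := by
  have hA : r ≤ dA := (Nat.le_mul_of_pos_left r hr).trans hrdA
  have hB : r ≤ dB := hA.trans hdAdB
  subst hρ
  refine IsLeast.csInf_eq ⟨hasSchmidtNumberLE_plusState_add_one (by linarith) (by positivity) hr,
    fun m hm => ?_⟩
  by_contra! hmr
  have hwitness := hm.re_trace_mul_nonneg _
    fun v hv => re_star_dotProduct_schmidtWitness_mulVec_nonneg hA hB hr v hv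
  exact (re_trace_schmidtWitness_mul_lt_zero hmr hrdA hdAdB hε0 hε).not_ge hwitness
end

section
/- Let A be a real symmetric D×D matrix with χ distinct nonzero eigenvalues x_0,...,x_{χ−1} (with multiplicities m_i), satisfying A ≤ k·I for a positive integer k. For odd N ≥ 2χ−1, define the Hankel matrix B_N with entries (B_N)_{mn} = Tr(A^{m+n+1}) for 0 ≤ m,n ≤ (N−1)/2. Then B_N is positive semidefinite if and only if A is positive semidefinite. -/
/-!
Writing `λ` for the eigenvalues of `A`, the Hankel matrix of `Tr A^(m+n+1)` is
`∑ λ • b(λ) b(λ)ᵀ` with `b(x) = (1, x, …, x^d)`, so its quadratic form at the coefficient vector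
of a polynomial `q` of degree `≤ d` is `∑ λ q(λ)²`. This is nonnegative when `A ⪰ 0`. Conversely,
if some eigenvalue `λ₀` is negative, the Lagrange polynomial that is `1` at `λ₀` and vanishes at
the other nonzero eigenvalues has degree `χ - 1 ≤ d` and makes the form equal to a positive
multiple of `λ₀`.
-/

open Polynomial

namespace Matrix.IsHermitian

variable {𝕜 n : Type*} [RCLike 𝕜] [Fintype n] [DecidableEq n] {A : Matrix n n 𝕜}

theorem trace_pow (hA : A.IsHermitian) (j : ℕ) :
    (A ^ j).trace = ∑ i, (hA.eigenvalues i : 𝕜) ^ j := by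
  conv_lhs => rw [hA.spectral_theorem]
  rw [← map_pow, diagonal_pow, Unitary.conjStarAlgAut_apply,
    trace_mul_cycle, Unitary.coe_star_mul_self, one_mul, trace_diagonal]
  rfl

end Matrix.IsHermitian

namespace Matrix

open Finset

variable {ι R : Type*} [Fintype ι] [CommSemiring R]

def momentHankel (μ : ι → R) (d : ℕ) : Matrix (Fin (d + 1)) (Fin (d + 1)) R :=
  of fun m n => ∑ i, μ i ^ ((m : ℕ) + n + 1)

theorem momentHankel_isSymm (μ : ι → R) (d : ℕ) : (momentHankel μ d).IsSymm :=
  IsSymm.ext fun m n => by simp only [momentHankel, of_apply, Nat.add_comm (m : ℕ)]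

theorem dotProduct_momentHankel_mulVec (μ : ι → R) (d : ℕ) (x : Fin (d + 1) → R) :
    x ⬝ᵥ momentHankel μ d *ᵥ x = ∑ i, μ i * (∑ m, x m * μ i ^ (m : ℕ)) ^ 2 := by
  simp only [dotProduct, mulVec, momentHankel, of_apply, mul_sum, sum_mul, sq]
  refine (sum_congr rfl fun m _ => sum_comm).trans (sum_comm.trans ?_)
  refine sum_congr rfl fun i _ => sum_congr rfl fun m _ => sum_congr rfl fun n _ => ?_
  ring

theorem coeff_dotProduct_momentHankel_mulVec_coeff (μ : ι → R) {d : ℕ} {p : R[X]}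
    (hp : p.natDegree ≤ d) :
    (fun m : Fin (d + 1) => p.coeff m) ⬝ᵥ momentHankel μ d *ᵥ (fun m => p.coeff m) =
      ∑ i, μ i * p.eval (μ i) ^ 2 := by
  simp only [dotProduct_momentHankel_mulVec, eval_eq_sum_range' (Nat.lt_succ_of_le hp),
    sum_range]

theorem momentHankel_posSemidef {μ : ι → ℝ} (hμ : ∀ i, 0 ≤ μ i) (d : ℕ) :
    (momentHankel μ d).PosSemidef := by
  refine .of_dotProduct_mulVec_nonneg (isHermitian_iff_isSymm.2 (momentHankel_isSymm μ d))
    fun x => ?_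
  rw [star_trivial, dotProduct_momentHankel_mulVec]
  exact sum_nonneg fun i _ => mul_nonneg (hμ i) (sq_nonneg _)

theorem nonneg_of_momentHankel_posSemidef {μ : ι → ℝ} {d : ℕ}
    (hd : #((univ.image μ).filter (· ≠ 0)) - 1 ≤ d)
    (hpsd : (momentHankel μ d).PosSemidef) (i : ι) : 0 ≤ μ i := by
  by_contra! hi
  set S := (univ.image μ).filter (· ≠ 0)
  have hiS : μ i ∈ S := by simpa [S] using hi.ne
  set p := Lagrange.basis S id (μ i)
  have hp_self : p.eval (μ i) = 1 := Lagrange.eval_basis_self (Set.injOn_id _) hiS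
  have hp_ne : ∀ j, μ j ≠ 0 → μ j ≠ μ i → p.eval (μ j) = 0 := fun j hj0 hji =>
    Lagrange.eval_basis_of_ne (v := id) hji.symm (by simpa [S] using hj0)
  have hp_deg : p.natDegree ≤ d := (Lagrange.natDegree_basis (Set.injOn_id _) hiS).trans_le hd
  have hform := coeff_dotProduct_momentHankel_mulVec_coeff μ hp_deg
  have hneg : ∑ j, μ j * p.eval (μ j) ^ 2 < 0 := by
    refine sum_neg' (fun j _ => ?_) ⟨i, mem_univ i, by simpa [hp_self] using hi⟩
    by_cases hj0 : μ j = 0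
    · simp [hj0]
    by_cases hji : μ j = μ i
    · simpa [hji, hp_self] using hi.le
    · simp [hp_ne j hj0 hji]
  have hnonneg := hpsd.dotProduct_mulVec_nonneg (fun m => p.coeff m)
  rw [star_trivial, hform] at hnonneg
  linarith

theorem momentHankel_posSemidef_iff {μ : ι → ℝ} {d : ℕ}
    (hd : #((univ.image μ).filter (· ≠ 0)) - 1 ≤ d) :
    (momentHankel μ d).PosSemidef ↔ ∀ i, 0 ≤ μ i :=
  ⟨nonneg_of_momentHankel_posSemidef hd, fun hμ => momentHankel_posSemidef hμ d⟩

end Matrix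

theorem stmt13_general (D χ N : ℕ)
    (A : Matrix (Fin D) (Fin D) ℝ) (hA : A.IsHermitian)
    (hχ : ((Finset.univ.image hA.eigenvalues).filter fun x => x ≠ 0).card = χ)
    (hNχ : 2 * χ - 1 ≤ N) :
    (Matrix.of fun m n : Fin ((N - 1) / 2 + 1) =>
        (A ^ ((m : ℕ) + (n : ℕ) + 1)).trace).PosSemidef ↔ A.PosSemidef := by
  have hB : (Matrix.of fun m n : Fin ((N - 1) / 2 + 1) => (A ^ ((m : ℕ) + (n : ℕ) + 1)).trace) =
      Matrix.momentHankel hA.eigenvalues ((N - 1) / 2) := by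
    ext m n
    simp [Matrix.momentHankel, hA.trace_pow]
  rw [hB, Matrix.momentHankel_posSemidef_iff (by omega), hA.posSemidef_iff_eigenvalues_nonneg,
    Pi.le_def]
  rfl

theorem stmt13 (D k χ N : ℕ) (hk : 0 < k)
    (A : Matrix (Fin D) (Fin D) ℝ) (hA : A.IsHermitian)
    (hχ : ((Finset.univ.image hA.eigenvalues).filter fun x => x ≠ 0).card = χ)
    (hAk : ((k : ℝ) • (1 : Matrix (Fin D) (Fin D) ℝ) - A).PosSemidef)
    (hN : Odd N) (hNχ : 2 * χ - 1 ≤ N) :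
    (Matrix.of fun m n : Fin ((N - 1) / 2 + 1) =>
        (A ^ ((m : ℕ) + (n : ℕ) + 1)).trace).PosSemidef ↔ A.PosSemidef :=
  stmt13_general D χ N A hA hχ hNχ
end

section
/- Let |+_r⟩ = (1/√r)∑_{i=0}^{r−1}|ii⟩ be the rank-r maximally entangled state and 1 ≤ k < r. Then the 2×2 Hankel matrix B_3 = [[q_1, q_2],[q_2, q_3]], built from the moments q_n = Tr(R_k(+_r)^n) with R_k(+_r) = k ρ_A ⊗ I_B − |+_r⟩⟨+_r|, is not positive semidefinite. -/
/-!
With `ψ = |+_r⟩`, `P = |ψ⟩⟨ψ|` and `Q = Π_r ⊗ I`, where `Π_r = r ρ_A` (`truncProj dA r`) is the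
projection onto the support of `ρ_A`, one has `R = b Q - P` with `b = k / r`. Since `Q - P` and `P` are orthogonal
projections, `R = b (Q - P) + (b - 1) P`, so `q_n = (r d_B - 1) bⁿ + (b - 1)ⁿ` for `n ≥ 1`.
For such a two-term power sum the Hankel determinant is
`q₁ q₃ - q₂² = (r d_B - 1) b (b - 1) (b - (b - 1))² = (r d_B - 1) b (b - 1)`,
which is negative because `0 < b < 1`.
-/

open Matrix Kronecker

/-- Partial trace over the second factor (real matrices). -/
noncomputable def ptraceBR (dA dB : ℕ) (ρ : Matrix (Fin dA × Fin dB) (Fin dA × Fin dB) ℝ) :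
    Matrix (Fin dA) (Fin dA) ℝ :=
  fun a a' => ∑ b, ρ (a, b) (a', b)

/-- The rank-`r` maximally entangled state `|+_r⟩ = (1/√r) ∑_{i<r} |ii⟩`. -/
noncomputable def plusStateR (dA dB r : ℕ) : Fin dA × Fin dB → ℝ :=
  fun p => if (p.1 : ℕ) = (p.2 : ℕ) ∧ (p.1 : ℕ) < r then 1 / Real.sqrt r else 0

section OrthogonalIdempotents

variable {K A : Type*} [CommRing K] [Ring A] [Algebra K A]

theorem pow_succ_smul_add_smul_of_orthogonal {e f : A} (he : IsIdempotentElem e)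
    (hf : IsIdempotentElem f) (hef : e * f = 0) (hfe : f * e = 0) (x y : K) (n : ℕ) :
    (x • e + y • f) ^ (n + 1) = x ^ (n + 1) • e + y ^ (n + 1) • f := by
  induction n with
  | zero => simp
  | succ n ih =>
    rw [pow_succ, ih]
    simp only [add_mul, mul_add, smul_mul_smul_comm, he.eq, hf.eq, hef, hfe, smul_zero]
    module

theorem pow_succ_smul_sub_of_mul_eq {Q P : A} (hQ : IsIdempotentElem Q) (hP : IsIdempotentElem P)
    (hQP : Q * P = P) (hPQ : P * Q = P) (b : K) (n : ℕ) :
    (b • Q - P) ^ (n + 1) = b ^ (n + 1) • (Q - P) + (b - 1) ^ (n + 1) • P := by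
  have hE : IsIdempotentElem (Q - P) := by
    simp only [IsIdempotentElem, sub_mul, mul_sub, hQ.eq, hP.eq, hQP, hPQ, sub_self, sub_zero]
  rw [← pow_succ_smul_add_smul_of_orthogonal hE hP
    (by rw [sub_mul, hQP, hP.eq, sub_self]) (by rw [mul_sub, hPQ, hP.eq, sub_self])]
  congr 1
  module

end OrthogonalIdempotents

theorem not_posSemidef_hankel_of_two_atoms {q : ℕ → ℝ} {α β x y : ℝ}
    (hq : ∀ n, q (n + 1) = α * x ^ (n + 1) + β * y ^ (n + 1))
    (hneg : α * β * x * y < 0) (hxy : x ≠ y) :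
    ¬ (!![q 1, q 2; q 2, q 3]).PosSemidef := by
  intro hpsd
  have hdet := hpsd.det_nonneg
  have hsq : 0 < (x - y) ^ 2 := by positivity [sub_ne_zero.2 hxy]
  have hhankel : q 1 * q 3 - q 2 * q 2 = α * β * x * y * (x - y) ^ 2 := by
    rw [hq 0, hq 1, hq 2]; ring
  rw [det_fin_two_of, hhankel] at hdet
  nlinarith

theorem trace_ptraceBR (dA dB : ℕ) (ρ : Matrix (Fin dA × Fin dB) (Fin dA × Fin dB) ℝ) :
    (ptraceBR dA dB ρ).trace = ρ.trace := by
  simp only [trace, diag, ptraceBR, Fintype.sum_prod_type]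

theorem isIdempotentElem_vecMulVec_self {n : Type*} [Fintype n] {ψ : n → ℝ}
    (hψ : ψ ⬝ᵥ ψ = 1) : IsIdempotentElem (vecMulVec ψ ψ) := by
  rw [IsIdempotentElem, vecMulVec_mul_vecMulVec, hψ, one_smul]

noncomputable def truncProj (d r : ℕ) : Matrix (Fin d) (Fin d) ℝ :=
  diagonal fun a => if (a : ℕ) < r then 1 else 0

theorem isIdempotentElem_truncProj (d r : ℕ) : IsIdempotentElem (truncProj d r) := by
  rw [IsIdempotentElem, truncProj, diagonal_mul_diagonal]
  congr 1
  funext a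
  split_ifs <;> norm_num

theorem trace_truncProj {d r : ℕ} (hrd : r ≤ d) : (truncProj d r).trace = r := by
  rw [truncProj, trace_diagonal, Finset.sum_boole, Fin.card_filter_val_lt, min_eq_right hrd]

theorem plusStateR_eq_zero_of_le {dA dB r : ℕ} {p : Fin dA × Fin dB} (hp : r ≤ (p.1 : ℕ)) :
    plusStateR dA dB r p = 0 :=
  if_neg fun h => (h.2.trans_le hp).false

theorem ptraceBR_plusStateR {dA dB : ℕ} (r : ℕ) (hdAdB : dA ≤ dB) :
    ptraceBR dA dB (vecMulVec (plusStateR dA dB r) (plusStateR dA dB r)) =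
      (r : ℝ)⁻¹ • truncProj dA r := by
  ext a a'
  simp only [ptraceBR, vecMulVec_apply, Matrix.smul_apply, truncProj, diagonal_apply, smul_eq_mul]
  rw [Finset.sum_eq_single ⟨a, a.2.trans_le hdAdB⟩ (fun c _ hc => ?_) (by simp)]
  · have hr : (1 / √r) * (1 / √r) = (r : ℝ)⁻¹ := by
      rw [div_mul_div_comm, one_mul, Real.mul_self_sqrt r.cast_nonneg, one_div]
    simp only [plusStateR, Fin.ext_iff]
    split_ifs <;> grind
  · rw [plusStateR, if_neg fun h => hc (Fin.ext h.1.symm), zero_mul]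

theorem truncProj_kronecker_one (dA dB r : ℕ) :
    truncProj dA r ⊗ₖ (1 : Matrix (Fin dB) (Fin dB) ℝ) =
      diagonal fun p => if (p.1 : ℕ) < r then 1 else 0 := by
  rw [truncProj, ← diagonal_one, diagonal_kronecker_diagonal]
  simp only [mul_one]

theorem ite_mul_plusStateR {dA dB r : ℕ} (p : Fin dA × Fin dB) :
    (if (p.1 : ℕ) < r then 1 else 0) * plusStateR dA dB r p = plusStateR dA dB r p := by
  split_ifs with h
  · exact one_mul _
  · rw [plusStateR_eq_zero_of_le (not_lt.1 h), mul_zero]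

theorem truncProj_kronecker_one_mulVec_plusStateR (dA dB r : ℕ) :
    (truncProj dA r ⊗ₖ (1 : Matrix (Fin dB) (Fin dB) ℝ)) *ᵥ plusStateR dA dB r =
      plusStateR dA dB r := by
  ext p
  rw [truncProj_kronecker_one, mulVec_diagonal, ite_mul_plusStateR]

theorem plusStateR_vecMul_truncProj_kronecker_one (dA dB r : ℕ) :
    plusStateR dA dB r ᵥ* (truncProj dA r ⊗ₖ (1 : Matrix (Fin dB) (Fin dB) ℝ)) =
      plusStateR dA dB r := by
  ext p
  rw [truncProj_kronecker_one, vecMul_diagonal, mul_comm, ite_mul_plusStateR]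

theorem plusStateR_dotProduct_self {dA dB r : ℕ} (hr : r ≠ 0) (hrdA : r ≤ dA) (hdAdB : dA ≤ dB) :
    plusStateR dA dB r ⬝ᵥ plusStateR dA dB r = 1 := by
  rw [← trace_vecMulVec, ← trace_ptraceBR, ptraceBR_plusStateR r hdAdB, trace_smul,
    trace_truncProj hrdA, smul_eq_mul, inv_mul_cancel₀ (Nat.cast_ne_zero.2 hr)]

theorem stmt15 (dA dB r k : ℕ) (hk : 1 ≤ k) (hkr : k < r)
    (hrdA : r ≤ dA) (hdAdB : dA ≤ dB)
    (R : Matrix (Fin dA × Fin dB) (Fin dA × Fin dB) ℝ)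
    (hRdef : R = (k : ℝ) • (ptraceBR dA dB
        (Matrix.vecMulVec (plusStateR dA dB r) (plusStateR dA dB r))
          ⊗ₖ (1 : Matrix (Fin dB) (Fin dB) ℝ))
      - Matrix.vecMulVec (plusStateR dA dB r) (plusStateR dA dB r))
    (q : ℕ → ℝ) (hq : ∀ n, q n = (R ^ n).trace) :
    ¬ (!![q 1, q 2; q 2, q 3]).PosSemidef := by
  set ψ := plusStateR dA dB r
  set Q := truncProj dA r ⊗ₖ (1 : Matrix (Fin dB) (Fin dB) ℝ)
  set b : ℝ := k / r
  have hψ : ψ ⬝ᵥ ψ = 1 := plusStateR_dotProduct_self (by omega) hrdA hdAdB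
  have hR : R = b • Q - vecMulVec ψ ψ := by
    rw [hRdef, ptraceBR_plusStateR r hdAdB, smul_kronecker, smul_smul, ← div_eq_mul_inv]
  have hQ : IsIdempotentElem Q := by
    rw [IsIdempotentElem, ← mul_kronecker_mul, (isIdempotentElem_truncProj dA r).eq, one_mul]
  have hQP : Q * vecMulVec ψ ψ = vecMulVec ψ ψ := by
    rw [mul_vecMulVec, truncProj_kronecker_one_mulVec_plusStateR]
  have hPQ : vecMulVec ψ ψ * Q = vecMulVec ψ ψ := by
    rw [vecMulVec_mul, plusStateR_vecMul_truncProj_kronecker_one]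
  have hmoments : ∀ n, q (n + 1) = ((r * dB : ℝ) - 1) * b ^ (n + 1) + 1 * (b - 1) ^ (n + 1) := by
    intro n
    rw [hq, hR, pow_succ_smul_sub_of_mul_eq hQ (isIdempotentElem_vecMulVec_self hψ) hQP hPQ,
      trace_add, trace_smul, trace_smul, trace_sub, trace_kronecker, trace_truncProj hrdA,
      trace_one, Fintype.card_fin, trace_vecMulVec, hψ, smul_eq_mul, smul_eq_mul]
    ring
  have hr : (0 : ℝ) < r := Nat.cast_pos.2 (by omega)
  have hb : 0 < b := div_pos (by exact_mod_cast hk) hr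
  have hb1 : b < 1 := (div_lt_one hr).2 (by exact_mod_cast hkr)
  have hrdB : (2 : ℝ) ≤ r * dB := by
    exact_mod_cast Nat.mul_le_mul (by omega : 2 ≤ r) (by omega : 1 ≤ dB)
  refine not_posSemidef_hankel_of_two_atoms hmoments ?_ (by linarith)
  nlinarith [mul_pos hb (sub_pos.2 hb1)]
end
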